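/- arXiv:math/0607159 — 10 statements merged into one kernel-verified Lean document; each statement's English description precedes it below -/
import Mathlib

section
/- The map φ from [n]×[n] to [n²] defined by φ(i,j) = ((2−i)·n + (j−1)·(n−1) − 1 mod n²) + 1 is a bijection. -/
/-- The map `φ(i,j) = [((2−i)·n + (j−1)·(n−1) − 1) mod n²] + 1` on 1-based indices
`i, j ∈ {1,…,n}`, realized as a map `Fin n × Fin n → Fin (n²)` (so the final `+1`
corresponds to the identification of `[n²] = {1,…,n²}` with `Fin (n²)`). -/
def phiFin (n : ℕ) (hn : 1 ≤ n) (p : Fin n × Fin n) : Fin (n ^ 2) :=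
  ⟨(((2 - ((p.1 : ℕ) + 1 : ℤ)) * n + (((p.2 : ℕ) + 1 : ℤ) - 1) * ((n : ℤ) - 1) - 1) %
      ((n ^ 2 : ℕ) : ℤ)).toNat, by
    have h0 : 0 < n ^ 2 := pow_pos (by omega) 2
    have hz : (0 : ℤ) < ((n ^ 2 : ℕ) : ℤ) := by exact_mod_cast h0
    have h1 := Int.emod_nonneg
      ((2 - ((p.1 : ℕ) + 1 : ℤ)) * n + (((p.2 : ℕ) + 1 : ℤ) - 1) * ((n : ℤ) - 1) - 1) hz.ne'
    have h2 := Int.emod_lt_of_pos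
      ((2 - ((p.1 : ℕ) + 1 : ℤ)) * n + (((p.2 : ℕ) + 1 : ℤ) - 1) * ((n : ℤ) - 1) - 1) hz
    omega⟩

/-- The map φ from [n]×[n] to [n²] defined by
`φ(i,j) = ((2−i)·n + (j−1)·(n−1) − 1 mod n²) + 1` is a bijection. -/
theorem stmt_0 (n : ℕ) (hn : 1 ≤ n) : Function.Bijective (phiFin n hn) := by
  have hcard : Fintype.card (Fin n × Fin n) = Fintype.card (Fin (n ^ 2)) := by
    simp [sq]
  rw [Fintype.bijective_iff_injective_and_card]
  refine ⟨?_, hcard⟩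
  rintro ⟨i, j⟩ ⟨i', j'⟩ h
  have h' : ((phiFin n hn (i, j) : Fin (n ^ 2)) : ℕ) = ((phiFin n hn (i', j') : Fin (n ^ 2)) : ℕ) :=
    congrArg _ h
  simp only [phiFin] at h'
  set m : ℤ := ((n ^ 2 : ℕ) : ℤ) with hm
  have hmpos : (0 : ℤ) < m := by
    have h0 : 0 < n ^ 2 := pow_pos (by omega) 2
    rw [hm]; exact_mod_cast h0
  set x1 : ℤ := (2 - ((i : ℕ) + 1 : ℤ)) * n + (((j : ℕ) + 1 : ℤ) - 1) * ((n : ℤ) - 1) - 1 with hx1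
  set x2 : ℤ := (2 - ((i' : ℕ) + 1 : ℤ)) * n + (((j' : ℕ) + 1 : ℤ) - 1) * ((n : ℤ) - 1) - 1 with hx2
  have e1 := Int.emod_nonneg x1 hmpos.ne'
  have e2 := Int.emod_nonneg x2 hmpos.ne'
  have hmod : x1 % m = x2 % m := by omega
  have hdvd : m ∣ x1 - x2 := Int.ModEq.dvd hmod.symm
  have hkey : m ∣ ((i' : ℤ) - (i : ℤ)) * n + ((j : ℤ) - (j' : ℤ)) * ((n : ℤ) - 1) := by
    have : x1 - x2 = ((i' : ℤ) - (i : ℤ)) * n + ((j : ℤ) - (j' : ℤ)) * ((n : ℤ) - 1) := by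
      ring
    rwa [this] at hdvd
  have hnm : (n : ℤ) ∣ m := by
    refine ⟨n, ?_⟩
    push_cast [hm, sq]
    ring
  have hdvdj : (n : ℤ) ∣ ((j : ℤ) - (j' : ℤ)) := by
    have h1 : (n : ℤ) ∣ ((i' : ℤ) - (i : ℤ)) * n + ((j : ℤ) - (j' : ℤ)) * ((n : ℤ) - 1) :=
      hnm.trans hkey
    have h2 : (n : ℤ) ∣ (((i' : ℤ) - (i : ℤ)) * n + ((j : ℤ) - (j' : ℤ)) * n) :=
      ⟨((i' : ℤ) - (i : ℤ)) + ((j : ℤ) - (j' : ℤ)), by ring⟩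
    have h3 := dvd_sub h2 h1
    have heq : (((i' : ℤ) - (i : ℤ)) * n + ((j : ℤ) - (j' : ℤ)) * n) -
        (((i' : ℤ) - (i : ℤ)) * n + ((j : ℤ) - (j' : ℤ)) * ((n : ℤ) - 1)) =
        (j : ℤ) - (j' : ℤ) := by ring
    rwa [heq] at h3
  have hj : (j : ℤ) = (j' : ℤ) := by
    have hlt : |(j : ℤ) - (j' : ℤ)| < (n : ℤ) := by
      have := j.isLt; have := j'.isLt
      rw [abs_lt]
      constructor <;> [omega; omega]
    have := Int.eq_zero_of_abs_lt_dvd hdvdj hlt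
    omega
  have hdvdi : (n : ℤ) ∣ ((i' : ℤ) - (i : ℤ)) := by
    have hkey2 : m ∣ ((i' : ℤ) - (i : ℤ)) * n := by
      have : ((i' : ℤ) - (i : ℤ)) * n + ((j : ℤ) - (j' : ℤ)) * ((n : ℤ) - 1) =
          ((i' : ℤ) - (i : ℤ)) * n := by rw [hj]; ring
      rwa [this] at hkey
    obtain ⟨k, hk⟩ := hkey2
    refine ⟨k, ?_⟩
    have hn0 : (n : ℤ) ≠ 0 := by exact_mod_cast (by omega : n ≠ 0)
    have hmval : m = (n : ℤ) * (n : ℤ) := by push_cast [hm, sq]; ring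
    rw [hmval] at hk
    have : ((i' : ℤ) - (i : ℤ)) * n = ((n : ℤ) * k) * n := by rw [hk]; ring
    exact mul_right_cancel₀ hn0 this
  have hi : (i : ℤ) = (i' : ℤ) := by
    have hlt : |(i' : ℤ) - (i : ℤ)| < (n : ℤ) := by
      have := i.isLt; have := i'.isLt
      rw [abs_lt]
      constructor <;> [omega; omega]
    have := Int.eq_zero_of_abs_lt_dvd hdvdi hlt
    omega
  have : i = i' := Fin.ext (by exact_mod_cast hi)
  have : j = j' := Fin.ext (by exact_mod_cast hj)
  simp_all
end

section
/- The maps Ψ and Φ are mutually inverse bijections between the set F_n of rotation-classes of diagonals of the 2n-gon and the set [n]×[n]. -/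
/-- The 180°-rotation of a diagonal `(i,j)` (with `i < j < 2n`), re-sorted so that the
smaller endpoint comes first. -/
def rotD (n : ℕ) (p : ℕ × ℕ) : ℕ × ℕ :=
  if p.2 < n then (p.1 + n, p.2 + n)
  else if p.1 < n then (p.2 - n, p.1 + n)
  else (p.1 - n, p.2 - n)

/-- Diagonals of the `2n`-gon: pairs `(a,b)` with `a < b < 2n`. -/
def Diag (n : ℕ) := {p : ℕ × ℕ // p.1 < p.2 ∧ p.2 < 2 * n}

/-- The relation identifying a diagonal with its 180°-rotation; `F_n` is `Quot (DiagRel n)`. -/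
def DiagRel (n : ℕ) (x y : Diag n) : Prop := y.1 = x.1 ∨ y.1 = rotD n x.1

/-! Rotation by 180° moves each endpoint of a diagonal by `n`, and it exchanges the cases
`b - a ≤ n` and `b - a > n` precisely when it exchanges the order of the endpoints, so `Ψ` is
constant on classes. Every class contains a diagonal `(a, b)` with `a < n` and `b ≤ a + n`
(rotate once if `a ≥ n` or `b - a > n`). On it `Ψ` reads off `(a, b - 1 mod n)`, and `Φ` recovers
`b` from `b - 1 mod n` according to whether `b ≤ n`, i.e. whether `a ≤ b - 1 mod n`. -/

lemma Nat.mod_eq_mod_of_add_eq_or {a b n : ℕ} (h : a + n = b ∨ b + n = a ∨ a = b) :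
    a % n = b % n := by
  rcases h with rfl | rfl | rfl <;> simp

namespace Diag

variable {n : ℕ}

lemma pos (x : Diag n) : 0 < n := by
  have := x.2; omega

def psi (x : Diag n) : Fin n × Fin n :=
  have hn : 0 < n := x.pos
  if x.1.2 - x.1.1 ≤ n then
    (⟨x.1.1 % n, Nat.mod_lt _ hn⟩, ⟨(x.1.2 + n - 1) % n, Nat.mod_lt _ hn⟩)
  else
    (⟨x.1.2 % n, Nat.mod_lt _ hn⟩, ⟨(x.1.1 + n - 1) % n, Nat.mod_lt _ hn⟩)

def phi (p : Fin n × Fin n) : Diag n :=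
  if h : (p.1 : ℕ) ≤ p.2 then ⟨((p.1 : ℕ), (p.2 : ℕ) + 1), by have := p.2.isLt; omega⟩
  else ⟨((p.1 : ℕ), (p.2 : ℕ) + 1 + n), by have := p.1.isLt; omega⟩

lemma phi_of_le {i j : Fin n} (h : (i : ℕ) ≤ j) :
    phi (i, j) = ⟨((i : ℕ), (j : ℕ) + 1), by omega⟩ :=
  dif_pos h

lemma phi_of_lt {i j : Fin n} (h : (j : ℕ) < i) :
    phi (i, j) = ⟨((i : ℕ), (j : ℕ) + 1 + n), by omega⟩ :=
  dif_neg (not_le.mpr h)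

def IsNormal (x : Diag n) : Prop := x.1.1 < n ∧ x.1.2 ≤ x.1.1 + n

lemma psi_eq_of_diagRel {x y : Diag n} (h : DiagRel n x y) : y.psi = x.psi := by
  obtain ⟨⟨a, b⟩, hab⟩ := x
  obtain ⟨⟨c, d⟩, hcd⟩ := y
  rcases h with h | h
  · simp only [Prod.mk.injEq] at h
    obtain ⟨rfl, rfl⟩ := h
    rfl
  · simp only [rotD] at h hab hcd
    split_ifs at h <;> simp only [Prod.mk.injEq] at h <;> obtain ⟨rfl, rfl⟩ := h <;>
      simp only [psi] <;> split_ifs <;>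
      first
        | omega
        | exact Prod.ext (Fin.ext (Nat.mod_eq_mod_of_add_eq_or (by omega)))
            (Fin.ext (Nat.mod_eq_mod_of_add_eq_or (by omega)))

lemma exists_diagRel_isNormal (x : Diag n) : ∃ y, DiagRel n x y ∧ y.IsNormal := by
  obtain ⟨⟨a, b⟩, hab⟩ := x
  by_cases hx : a < n ∧ b ≤ a + n
  · exact ⟨⟨(a, b), hab⟩, Or.inl rfl, hx⟩
  · refine ⟨⟨rotD n (a, b), ?_⟩, Or.inr rfl, ?_⟩ <;>
      simp only [rotD] at hab ⊢ <;> split_ifs <;> simp only [IsNormal] <;> omega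

lemma phi_psi_of_isNormal {x : Diag n} (hx : x.IsNormal) : phi x.psi = x := by
  obtain ⟨⟨a, b⟩, hab⟩ := x
  obtain ⟨ha, hb⟩ : a < n ∧ b ≤ a + n := hx
  have hpsi : psi ⟨(a, b), hab⟩ = (⟨a, ha⟩, ⟨(b + n - 1) % n, Nat.mod_lt _ (by omega)⟩) := by
    simp only [psi, if_pos (show b - a ≤ n by omega), Nat.mod_eq_of_lt ha]
  by_cases hbn : b ≤ n
  · have hj : (b + n - 1) % n = b - 1 := by
      rw [show b + n - 1 = b - 1 + n by omega, Nat.add_mod_right, Nat.mod_eq_of_lt (by omega)]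
    simp only [hj] at hpsi
    rw [hpsi, phi_of_le (by simp only; omega)]
    exact Subtype.ext (Prod.ext rfl (by simp only; omega))
  · have hj : (b + n - 1) % n = b - n - 1 := by
      rw [show b + n - 1 = b - n - 1 + n + n by omega, Nat.add_mod_right, Nat.add_mod_right,
        Nat.mod_eq_of_lt (by omega)]
    simp only [hj] at hpsi
    rw [hpsi, phi_of_lt (by simp only; omega)]
    exact Subtype.ext (Prod.ext rfl (by simp only; omega))

lemma psi_phi (p : Fin n × Fin n) : (phi p).psi = p := by
  obtain ⟨⟨i, hi⟩, ⟨j, hj⟩⟩ := p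
  rcases le_or_gt i j with hij | hij
  · rw [phi_of_le hij]
    simp only [psi, if_pos (show j + 1 - i ≤ n by omega), show j + 1 + n - 1 = j + n by omega,
      Nat.add_mod_right, Nat.mod_eq_of_lt hi, Nat.mod_eq_of_lt hj]
  · rw [phi_of_lt hij]
    simp only [psi, if_pos (show j + 1 + n - i ≤ n by omega),
      show j + 1 + n + n - 1 = j + n + n by omega, Nat.add_mod_right, Nat.mod_eq_of_lt hi,
      Nat.mod_eq_of_lt hj]

end Diag

/-- The maps Ψ and Φ are mutually inverse bijections between the set `F_n` of
rotation-classes of diagonals of the `2n`-gon and the set `[n] × [n]`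
(realized as `Fin n × Fin n`, an element `(i,j) ∈ [n]×[n]` corresponding to the pair
of `Fin`s with values `i-1`, `j-1`; residues mod `n` taken in `{1,…,n}` correspond to
plain `% n` on the `Fin`-values). -/
theorem stmt_1 (n : ℕ) :
    ∃ (Ψ : Quot (DiagRel n) → Fin n × Fin n) (Φ : Fin n × Fin n → Quot (DiagRel n)),
      Function.LeftInverse Φ Ψ ∧ Function.RightInverse Φ Ψ ∧
      (∀ (a b : ℕ) (h : a < b ∧ b < 2 * n),
        Ψ (Quot.mk _ (⟨(a, b), h⟩ : Diag n)) =
          if b - a ≤ n then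
            (⟨a % n, Nat.mod_lt _ (by omega)⟩, ⟨(b + n - 1) % n, Nat.mod_lt _ (by omega)⟩)
          else
            (⟨b % n, Nat.mod_lt _ (by omega)⟩, ⟨(a + n - 1) % n, Nat.mod_lt _ (by omega)⟩)) ∧
      (∀ p : Fin n × Fin n,
        Φ p =
          if h : (p.1 : ℕ) ≤ (p.2 : ℕ) then
            Quot.mk _ (⟨((p.1 : ℕ), (p.2 : ℕ) + 1),
              ⟨by omega, by have := p.2.isLt; omega⟩⟩ : Diag n)
          else
            Quot.mk _ (⟨((p.1 : ℕ), (p.2 : ℕ) + 1 + n),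
              ⟨by omega, by have := p.1.isLt; omega⟩⟩ : Diag n)) := by
  refine ⟨Quot.lift Diag.psi fun _ _ h ↦ (Diag.psi_eq_of_diagRel h).symm,
    fun p ↦ Quot.mk _ (Diag.phi p), ?_, ?_, fun _ _ _ ↦ rfl, fun p ↦ ?_⟩
  · refine Quot.ind fun x ↦ ?_
    obtain ⟨y, hxy, hy⟩ := x.exists_diagRel_isNormal
    show Quot.mk _ (Diag.phi x.psi) = Quot.mk _ x
    rw [← Diag.psi_eq_of_diagRel hxy, Diag.phi_psi_of_isNormal hy]
    exact (Quot.sound hxy).symm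
  · exact Diag.psi_phi
  · exact apply_dite (Quot.mk (DiagRel n)) _ _ _
end

section
/- Let Δ be a pure simplicial complex of dimension d on vertex set {x₁,…,xₙ} and J a monomial ideal in S = K[x₁,…,xₙ] with I_Δ ⊆ J and dim(S/I_Δ) = dim(S/J). Then the multiplicities satisfy e(S/I_Δ) ≥ e(S/J). -/
open MvPolynomial

/-- The Stanley–Reisner ideal of a simplicial complex `Δ` on vertex set `Fin ℓ`:
generated by the squarefree monomials `∏_{v ∈ σ} X v` over the non-faces `σ`
(equivalently, over the minimal non-faces). -/
noncomputable def SRideal (K : Type) [Field K] (ℓ : ℕ) (Δ : Finset (Finset (Fin ℓ))) :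
    Ideal (MvPolynomial (Fin ℓ) K) :=
  Ideal.span {f | ∃ σ : Finset (Fin ℓ), σ ∉ Δ ∧ f = ∏ v ∈ σ, X v}

/-- A monomial ideal: an ideal generated by a set of monomials. -/
def IsMonomialIdeal {K : Type} [Field K] {ℓ : ℕ} (J : Ideal (MvPolynomial (Fin ℓ) K)) : Prop :=
  ∃ M : Set (Fin ℓ →₀ ℕ), J = Ideal.span ((fun μ => (monomial μ (1 : K))) '' M)

/-- The Hilbert function of the quotient by a monomial ideal `I`: the number of
monomials of total degree `m` not belonging to `I` (these form a `K`-basis of the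
degree-`m` part of `S/I`). -/
noncomputable def hilbF (K : Type) [Field K] (ℓ : ℕ) (I : Ideal (MvPolynomial (Fin ℓ) K))
    (m : ℕ) : ℕ :=
  Nat.card {μ : Fin ℓ →₀ ℕ // (μ.sum fun _ e => e) = m ∧ monomial μ (1 : K) ∉ I}

/-- `e` is the multiplicity of `S/I` (for `dim Δ = d`, Krull dimension `d+1`):
the Hilbert function satisfies `HF(m) ~ e·m^d/d!`. -/
def IsMultiplicity (K : Type) [Field K] (ℓ : ℕ) (I : Ideal (MvPolynomial (Fin ℓ) K))
    (d : ℕ) (e : ℝ) : Prop :=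
  Filter.Tendsto (fun m : ℕ => (hilbF K ℓ I m : ℝ) * (Nat.factorial d) / (m : ℝ) ^ d)
    Filter.atTop (nhds e)

lemma finite_deg (ℓ m : ℕ) :
    Set.Finite {μ : Fin ℓ →₀ ℕ | (μ.sum fun _ e => e) = m} := by
  apply Set.Finite.ofFinset (((Finset.univ : Finset (Fin ℓ → Fin (m+1))).image
    (fun f => Finsupp.equivFunOnFinite.symm (fun i => (f i : ℕ)))).filter
    (fun μ => (μ.sum fun _ e => e) = m))
  intro μ
  simp only [Finset.mem_filter, Finset.mem_image, Finset.mem_univ, true_and,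
    Set.mem_setOf_eq]
  constructor
  · rintro ⟨-, h⟩
    exact h
  · intro hμ
    refine ⟨?_, hμ⟩
    have hbd : ∀ i, μ i ≤ m := by
      intro i
      by_cases h : μ i = 0
      · omega
      · have hi : i ∈ μ.support := Finsupp.mem_support_iff.mpr h
        calc μ i ≤ ∑ j ∈ μ.support, μ j :=
              Finset.single_le_sum (fun j _ => Nat.zero_le _) hi
          _ = m := hμ
    refine ⟨fun i => ⟨μ i, Nat.lt_succ_of_le (hbd i)⟩, ?_⟩
    apply Finsupp.ext
    intro i
    simp [Finsupp.equivFunOnFinite]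

/-- Let `Δ` be a pure simplicial complex of dimension `d` on vertex set `{x₁,…,x_ℓ}` and
`J` a monomial ideal in `S = K[x₁,…,x_ℓ]` with `I_Δ ⊆ J` and `dim S/I_Δ = dim S/J`.
Then the multiplicities satisfy `e(S/I_Δ) ≥ e(S/J)`. -/
theorem stmt_4 (K : Type) [Field K] (ℓ d : ℕ) (Δ : Finset (Finset (Fin ℓ)))
    (hempty : ∅ ∈ Δ)
    (hdown : ∀ s ∈ Δ, ∀ t ⊆ s, t ∈ Δ)
    (hpure : ∀ s ∈ Δ, (∀ t ∈ Δ, s ⊆ t → t = s) → s.card = d + 1)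
    (J : Ideal (MvPolynomial (Fin ℓ) K)) (hJmono : IsMonomialIdeal J)
    (hIJ : SRideal K ℓ Δ ≤ J)
    (hdim : ringKrullDim (MvPolynomial (Fin ℓ) K ⧸ SRideal K ℓ Δ) =
            ringKrullDim (MvPolynomial (Fin ℓ) K ⧸ J))
    (eI eJ : ℝ)
    (heI : IsMultiplicity K ℓ (SRideal K ℓ Δ) d eI)
    (heJ : IsMultiplicity K ℓ J d eJ) :
    eJ ≤ eI := by
  have hle : ∀ m : ℕ, (hilbF K ℓ J m : ℝ) * (Nat.factorial d) / (m : ℝ) ^ d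
      ≤ (hilbF K ℓ (SRideal K ℓ Δ) m : ℝ) * (Nat.factorial d) / (m : ℝ) ^ d := by
    intro m
    have hcard : hilbF K ℓ J m ≤ hilbF K ℓ (SRideal K ℓ Δ) m := by
      unfold hilbF
      have h1 : {μ : Fin ℓ →₀ ℕ | (μ.sum fun _ e => e) = m ∧ monomial μ (1 : K) ∉ J}
          ⊆ {μ : Fin ℓ →₀ ℕ | (μ.sum fun _ e => e) = m ∧
              monomial μ (1 : K) ∉ SRideal K ℓ Δ} := by
        rintro μ ⟨h1, h2⟩
        exact ⟨h1, fun h => h2 (hIJ h)⟩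
      have h2 : {μ : Fin ℓ →₀ ℕ | (μ.sum fun _ e => e) = m ∧
          monomial μ (1 : K) ∉ SRideal K ℓ Δ}.Finite :=
        (finite_deg ℓ m).subset (fun μ h => h.1)
      exact Nat.card_mono h2 h1
    rw [div_eq_mul_inv, div_eq_mul_inv]
    apply mul_le_mul_of_nonneg_right _ (by positivity)
    apply mul_le_mul_of_nonneg_right _ (by positivity)
    exact_mod_cast hcard
  exact le_of_tendsto_of_tendsto' heJ heI hle
end

section
/- Let T = k[x₁,…,x_ℓ] and let I ⊆ J be monomial ideals in T such that (i) dim(T/I) = dim(T/J), (ii) e(T/I) = e(T/J), and (iii) I = I_Δ for a pure simplicial complex Δ on ground set [ℓ]. Then I = J. -/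
/-!
If `I_Δ ≠ J`, some monomial `x^μ` lies in `J` but not in `I_Δ`, so its support is a face of `Δ`
and lies in a facet `F`, which has `d + 1` vertices by purity. Every `x^(μ + ν)` with `ν`
supported on `F` is still in `J` and not in `I_Δ`; in degree `m` these are
`(m - |μ| + d).choose d ∼ m^d / d!` monomials, so the Hilbert functions of `T/I_Δ` and `T/J`
differ by that much and `e(T/I_Δ) ≥ e(T/J) + 1`.
-/

open MvPolynomial

open Finsupp Filter Topology
open scoped Nat

section Monomials

variable {σ R : Type*} [CommSemiring R]

theorem prod_X_eq_monomial (s : Finset σ) :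
    ∏ v ∈ s, X v = monomial (∑ v ∈ s, single v 1) (1 : R) :=
  (monomial_sum_one s fun v => single v 1).symm

theorem sum_single_one_le_iff (s : Finset σ) (μ : σ →₀ ℕ) :
    ∑ v ∈ s, single v 1 ≤ μ ↔ s ⊆ μ.support := by
  classical
  simp only [Finsupp.le_def, Finsupp.finsetSum_apply, single_apply, Finset.sum_ite_eq',
    Finset.subset_iff, Finsupp.mem_support_iff]
  refine ⟨fun h v hv => ?_, fun h v => ?_⟩
  · simpa [hv, Nat.one_le_iff_ne_zero] using h v
  · split_ifs with hv
    · exact Nat.one_le_iff_ne_zero.2 (h hv)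
    · exact Nat.zero_le _

theorem monomial_mem_span_monomial_image_iff [Nontrivial R] {S : Set (σ →₀ ℕ)} {μ : σ →₀ ℕ} :
    monomial μ (1 : R) ∈ Ideal.span ((fun ν => monomial ν (1 : R)) '' S) ↔ ∃ ν ∈ S, ν ≤ μ := by
  classical
  simp [mem_ideal_span_monomial_image, support_monomial]

end Monomials

theorem IsMonomialIdeal.exists_monomial_mem_notMem_of_lt {K : Type} [Field K] {ℓ : ℕ}
    {I J : Ideal (MvPolynomial (Fin ℓ) K)} (hJ : IsMonomialIdeal J) (hIJ : I < J) :
    ∃ μ, monomial μ (1 : K) ∈ J ∧ monomial μ (1 : K) ∉ I := by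
  obtain ⟨M, rfl⟩ := hJ
  by_contra! hM
  refine hIJ.not_ge (Ideal.span_le.2 ?_)
  rintro _ ⟨μ, hμ, rfl⟩
  exact hM μ (Ideal.subset_span ⟨μ, hμ, rfl⟩)

section StanleyReisner

variable {K : Type} [Field K] {ℓ : ℕ} {Δ : Finset (Finset (Fin ℓ))}

theorem SRideal_eq_span_monomial :
    SRideal K ℓ Δ = Ideal.span ((fun ν => monomial ν (1 : K)) ''
      ((fun s => ∑ v ∈ s, single v 1) '' {s | s ∉ Δ})) := by
  rw [SRideal, Set.image_image]
  congr 1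
  ext f
  simp [prod_X_eq_monomial, eq_comm]

theorem monomial_mem_SRideal_iff (hdown : ∀ s ∈ Δ, ∀ t ⊆ s, t ∈ Δ) (μ : Fin ℓ →₀ ℕ) :
    monomial μ (1 : K) ∈ SRideal K ℓ Δ ↔ μ.support ∉ Δ := by
  rw [SRideal_eq_span_monomial, monomial_mem_span_monomial_image_iff]
  simp only [Set.mem_image, Set.mem_ofPred_eq, exists_exists_and_eq_and, sum_single_one_le_iff]
  exact ⟨fun ⟨s, hs, hsμ⟩ hμ => hs (hdown _ hμ s hsμ), fun h => ⟨_, h, subset_rfl⟩⟩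

end StanleyReisner

theorem exists_maximal_superset_mem {α : Type*} {Δ : Finset (Finset α)} {s : Finset α}
    (hs : s ∈ Δ) : ∃ F ∈ Δ, s ⊆ F ∧ ∀ t ∈ Δ, F ⊆ t → t = F := by
  obtain ⟨F, hsF, hF⟩ := Δ.exists_le_maximal hs
  exact ⟨F, hF.prop, hsF, fun t ht hFt => hF.eq_of_ge ht hFt⟩

section HilbertFunction

variable {K : Type} [Field K] {ℓ : ℕ}

theorem hilbF_eq_ncard (I : Ideal (MvPolynomial (Fin ℓ) K)) (m : ℕ) :
    hilbF K ℓ I m = {μ : Fin ℓ →₀ ℕ | μ.degree = m ∧ monomial μ (1 : K) ∉ I}.ncard :=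
  Nat.card_coe_set_eq _

theorem hilbF_add_card_le {I J : Ideal (MvPolynomial (Fin ℓ) K)} (hIJ : I ≤ J) {m : ℕ}
    (s : Finset (Fin ℓ →₀ ℕ))
    (hs : ∀ ν ∈ s, ν.degree = m ∧ monomial ν (1 : K) ∈ J ∧ monomial ν (1 : K) ∉ I) :
    hilbF K ℓ J m + s.card ≤ hilbF K ℓ I m := by
  have hfin : {μ : Fin ℓ →₀ ℕ | μ.degree = m ∧ monomial μ (1 : K) ∉ I}.Finite :=
    (finite_of_degree_le m).subset fun μ hμ => hμ.1.le
  rw [hilbF_eq_ncard, hilbF_eq_ncard, ← Set.ncard_coe_finset,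
    ← Set.ncard_union_eq _ (hfin.subset fun μ hμ => ⟨hμ.1, fun h => hμ.2 (hIJ h)⟩)]
  · refine Set.ncard_le_ncard (Set.union_subset ?_ ?_) hfin
    · exact fun μ hμ => ⟨hμ.1, fun h => hμ.2 (hIJ h)⟩
    · exact fun ν hν => ⟨(hs ν hν).1, (hs ν hν).2.2⟩
  · exact Set.disjoint_left.2 fun ν hνJ hν => hνJ.2 (hs ν hν).2.1

theorem hilbF_add_choose_le {d : ℕ} {Δ : Finset (Finset (Fin ℓ))}
    (hdown : ∀ s ∈ Δ, ∀ t ⊆ s, t ∈ Δ) {F : Finset (Fin ℓ)} (hF : F ∈ Δ) (hcard : F.card = d + 1)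
    {J : Ideal (MvPolynomial (Fin ℓ) K)} (hIJ : SRideal K ℓ Δ ≤ J)
    {μ : Fin ℓ →₀ ℕ} (hμJ : monomial μ (1 : K) ∈ J) (hμF : μ.support ⊆ F)
    {m : ℕ} (hm : μ.degree ≤ m) :
    hilbF K ℓ J m + (m - μ.degree + d).choose d ≤ hilbF K ℓ (SRideal K ℓ Δ) m := by
  classical
  have hcard_shifts : ((F.finsuppAntidiag (m - μ.degree)).map (addLeftEmbedding μ)).card =
      (m - μ.degree + d).choose d := by
    rw [Finset.card_map, Finset.card_finsuppAntidiag_nat_eq_choose, hcard,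
      show d + 1 + (m - μ.degree) - 1 = m - μ.degree + d by omega, Nat.choose_symm_add]
  rw [← hcard_shifts]
  refine hilbF_add_card_le hIJ _ fun ν hν => ?_
  obtain ⟨ρ, hρ, rfl⟩ := Finset.mem_map.1 hν
  obtain ⟨hρdeg, hρF⟩ := Finset.mem_finsuppAntidiag'.1 hρ
  refine ⟨?_, ?_, ?_⟩
  · rw [addLeftEmbedding_apply, map_add]
    change ρ.degree = _ at hρdeg
    omega
  · rw [addLeftEmbedding_apply, ← one_mul (1 : K), ← monomial_mul]
    exact J.mul_mem_right _ hμJ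
  · rw [monomial_mem_SRideal_iff hdown, not_not]
    exact hdown F hF _ (support_add.trans (Finset.union_subset hμF hρF))

end HilbertFunction

theorem pow_div_factorial_le_choose (n d : ℕ) : (n : ℝ) ^ d / d ! ≤ (n + d).choose d := by
  refine le_trans ?_ (Nat.pow_le_choose d (n + d))
  rw [show n + d + 1 - d = n + 1 by omega]
  gcongr
  exact_mod_cast n.le_succ

theorem tendsto_sub_div_self_pow (c : ℝ) (d : ℕ) :
    Tendsto (fun m : ℕ => (((m : ℝ) - c) / m) ^ d) atTop (𝓝 1) := by
  have h : Tendsto (fun m : ℕ => 1 - c / m) atTop (𝓝 1) := by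
    simpa using tendsto_const_nhds.sub (tendsto_const_div_atTop_nhds_zero_nat c)
  refine (one_pow (M := ℝ) d ▸ h.pow d).congr' ?_
  filter_upwards [eventually_ne_atTop 0] with m hm
  rw [sub_div, div_self (Nat.cast_ne_zero.2 hm)]

theorem add_one_le_of_choose_gap {u v : ℕ → ℕ} {c d : ℕ} {a b : ℝ}
    (hu : Tendsto (fun m : ℕ => (u m : ℝ) * d ! / (m : ℝ) ^ d) atTop (𝓝 a))
    (hv : Tendsto (fun m : ℕ => (v m : ℝ) * d ! / (m : ℝ) ^ d) atTop (𝓝 b))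
    (hgap : ∀ m ≥ c, v m + (m - c + d).choose d ≤ u m) : b + 1 ≤ a := by
  rw [← le_sub_iff_add_le']
  refine le_of_tendsto_of_tendsto (tendsto_sub_div_self_pow c d) (hu.sub hv) ?_
  filter_upwards [eventually_ge_atTop c] with m hm
  have hgap_real : (v m : ℝ) + ((m - c + d).choose d : ℕ) ≤ u m := by exact_mod_cast hgap m hm
  calc (((m : ℝ) - c) / m) ^ d = ((m - c : ℕ) : ℝ) ^ d / d ! * d ! / (m : ℝ) ^ d := by
        rw [Nat.cast_sub hm, div_mul_cancel₀ _ (by positivity), div_pow]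
    _ ≤ ((m - c + d).choose d : ℕ) * d ! / (m : ℝ) ^ d := by
        gcongr
        exact pow_div_factorial_le_choose _ _
    _ ≤ ((u m : ℝ) - v m) * d ! / (m : ℝ) ^ d := by gcongr; linarith
    _ = (u m : ℝ) * d ! / (m : ℝ) ^ d - (v m : ℝ) * d ! / (m : ℝ) ^ d := by ring

theorem stmt_5_general (K : Type) [Field K] (ℓ d : ℕ) (Δ : Finset (Finset (Fin ℓ)))
    (hdown : ∀ s ∈ Δ, ∀ t ⊆ s, t ∈ Δ)
    (hpure : ∀ s ∈ Δ, (∀ t ∈ Δ, s ⊆ t → t = s) → s.card = d + 1)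
    (J : Ideal (MvPolynomial (Fin ℓ) K)) (hJmono : IsMonomialIdeal J)
    (hIJ : SRideal K ℓ Δ ≤ J)
    (e : ℝ)
    (heI : IsMultiplicity K ℓ (SRideal K ℓ Δ) d e)
    (heJ : IsMultiplicity K ℓ J d e) :
    SRideal K ℓ Δ = J := by
  by_contra hne
  obtain ⟨μ, hμJ, hμI⟩ := hJmono.exists_monomial_mem_notMem_of_lt (hIJ.lt_of_ne hne)
  have hμΔ : μ.support ∈ Δ := by rwa [monomial_mem_SRideal_iff hdown, not_not] at hμI
  obtain ⟨F, hF, hμF, hFmax⟩ := exists_maximal_superset_mem hμΔ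
  have hgap : ∀ m ≥ μ.degree,
      hilbF K ℓ J m + (m - μ.degree + d).choose d ≤ hilbF K ℓ (SRideal K ℓ Δ) m :=
    fun _ hm => hilbF_add_choose_le hdown hF (hpure F hF hFmax) hIJ hμJ hμF hm
  linarith [add_one_le_of_choose_gap heI heJ hgap]

/-- (Jonsson–Welker lemma.) Let `T = K[x₁,…,x_ℓ]` and `I ⊆ J` monomial ideals with
(i) `dim T/I = dim T/J`, (ii) `e(T/I) = e(T/J)`, and (iii) `I = I_Δ` for a pure
simplicial complex `Δ` on `[ℓ]`. Then `I = J`. -/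
theorem stmt_5 (K : Type) [Field K] (ℓ d : ℕ) (Δ : Finset (Finset (Fin ℓ)))
    (hempty : ∅ ∈ Δ)
    (hdown : ∀ s ∈ Δ, ∀ t ⊆ s, t ∈ Δ)
    (hpure : ∀ s ∈ Δ, (∀ t ∈ Δ, s ⊆ t → t = s) → s.card = d + 1)
    (J : Ideal (MvPolynomial (Fin ℓ) K)) (hJmono : IsMonomialIdeal J)
    (hIJ : SRideal K ℓ Δ ≤ J)
    (hdim : ringKrullDim (MvPolynomial (Fin ℓ) K ⧸ SRideal K ℓ Δ) =
            ringKrullDim (MvPolynomial (Fin ℓ) K ⧸ J))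
    (e : ℝ)
    (heI : IsMultiplicity K ℓ (SRideal K ℓ Δ) d e)
    (heJ : IsMultiplicity K ℓ J d e) :
    SRideal K ℓ Δ = J :=
  stmt_5_general K ℓ d Δ hdown hpure J hJmono hIJ e heI heJ
end

section
/- If x_{a_i,b_j} divides the leading monomial of det M(A,B) with respect to the term order ≼, then lm(det M(A∖{a_i}, B∖{b_j})) · x_{a_i,b_j} = lm(det M(A,B)). -/
/-- The `i`-th smallest element of `A` (0-based `i`), extended beyond `A.card`
by values larger than every element of `{1,…,n}`. -/
def enumExt (n : ℕ) (A : Finset ℕ) (i : ℕ) : ℕ :=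
  if hi : i < A.card then A.orderEmbOfFin rfl ⟨i, hi⟩ else n + 1 + i

/-- The defining property of the shift `ℓ` in the definition of `N(A,B)`:
`a_{i+ℓ} > b_i` for all `i = 1,…,|A|−ℓ` (0-based here, the extension making the
out-of-range cases vacuously true for subsets of `{1,…,n}`). -/
def ShiftOK (n : ℕ) (A B : Finset ℕ) (ℓ : ℕ) : Prop :=
  ∀ i < A.card, enumExt n B i < enumExt n A (i + ℓ)

open Classical in
/-- The minimal shift `ℓ` with `a_{i+ℓ} > b_i` for all `i ≤ |A|−ℓ`; minimality is
equivalent to the side condition `ℓ = 0` or `a_{j+ℓ−1} ≤ b_j` for some `j`. -/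
noncomputable def ell (n : ℕ) (A B : Finset ℕ) : ℕ :=
  if h : ∃ ℓ, ShiftOK n A B ℓ then Nat.find h else 0

/-- The set `N(A,B) = {(a_{(i+ℓ) mod* m}, b_i) : i = 1,…,m}` (with `m = |A| = |B|`,
`mod*` taking representatives in `{1,…,m}`): the longest diagonal of `M(A,B)` strictly
below the main diagonal of `X`, together with the complementary diagonal. -/
noncomputable def NAB (n : ℕ) (A B : Finset ℕ) : Finset (ℕ × ℕ) :=
  (Finset.range A.card).image
    (fun i => (enumExt n A ((i + ell n A B) % A.card), enumExt n B i))

/-- The row- and column-selected submatrix `M(A,B) = (x_{ij})_{i∈A, j∈B}` of the generic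
matrix `X = (x_{ij})`, of size `m × m` (used with `m = |A| = |B|`). -/
noncomputable def MAB (K : Type) [Field K] (n : ℕ) (A B : Finset ℕ) (m : ℕ) :
    Matrix (Fin m) (Fin m) (MvPolynomial (ℕ × ℕ) K) :=
  Matrix.of fun i j => MvPolynomial.X (enumExt n A (i : ℕ), enumExt n B (j : ℕ))

/-!
The monomials of `det M(A,B)` are the diagonal monomials `∏ⱼ x_{a_{σ j}, b_j}`; they are pairwise
distinct, so each occurs with coefficient `±1`. Such a monomial is divisible by `x_{a_i,b_j}`
exactly when `σ j = i`, and then it is `x_{a_i,b_j}` times a diagonal monomial of the minor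
`M(A∖{a_i}, B∖{b_j})`; conversely every monomial of the minor arises this way. Hence the support
of the minor is the set of `ν` with `x_{a_i,b_j} · ν` in the support of `det M(A,B)`, and since
multiplication by a monomial is strictly monotone for a term order, the leading monomial of
`det M(A,B)` divided by `x_{a_i,b_j}` is the leading monomial of the minor.
-/

open Finset MvPolynomial Equiv Function

section LeadingTerm

variable {M : Type*} (lt : M → M → Prop)

def IsLeading (S : Set M) (μ : M) : Prop :=
  μ ∈ S ∧ ∀ ν ∈ S, ν ≠ μ → lt ν μ

theorem IsLeading.of_add_left [AddCommMonoid M] [IsLeftCancelAdd M] {S S' : Set M}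
    {e μ μ₀ : M}
    (hirr : ∀ μ, ¬ lt μ μ)
    (htrans : ∀ μ ν τ, lt μ ν → lt ν τ → lt μ τ)
    (htotal : ∀ μ ν, μ ≠ ν → lt μ ν ∨ lt ν μ)
    (hadd : ∀ μ ν τ, lt μ ν → lt (μ + τ) (ν + τ))
    (hS' : ∀ ν, ν ∈ S' ↔ e + ν ∈ S) (hμ : IsLeading lt S μ) (hμ₀ : μ = e + μ₀) :
    IsLeading lt S' μ₀ := by
  subst hμ₀
  refine ⟨(hS' μ₀).2 hμ.1, fun ν hν hne => ?_⟩
  have hlt : lt (e + ν) (e + μ₀) :=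
    hμ.2 _ ((hS' ν).1 hν) fun h => hne (add_left_cancel h)
  refine (htotal ν μ₀ hne).resolve_right fun hgt => hirr (e + ν) (htrans _ _ _ hlt ?_)
  simpa only [add_comm e] using hadd _ _ e hgt

end LeadingTerm

section GenericMatrix

variable {ι α β : Type*} [Fintype ι] [DecidableEq ι] {r : ι → α} {c : ι → β}

noncomputable def permMonomial (r : ι → α) (c : ι → β) (σ : Perm ι) : α × β →₀ ℕ :=
  ∑ i, Finsupp.single (r (σ i), c i) 1

theorem permMonomial_apply (hr : Injective r) (hc : Injective c) (σ : Perm ι) (a b : ι) :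
    permMonomial r c σ (r a, c b) = if σ b = a then 1 else 0 := by
  classical
  rw [permMonomial, Finsupp.finsetSum_apply, sum_eq_single b]
  · simp [Finsupp.single_apply, hr.eq_iff]
  · intro i _ hib
    simp [hc.eq_iff, hib]
  · simp

theorem permMonomial_injective (hr : Injective r) (hc : Injective c) :
    Injective (permMonomial r c) := by
  intro σ σ' h
  ext i
  have := permMonomial_apply hr hc σ' (σ i) i
  rw [← h, permMonomial_apply hr hc] at this
  simpa [eq_comm] using this

theorem det_of_X (R : Type*) [CommRing R] (r : ι → α) (c : ι → β) :
    (Matrix.of fun i j => (X (r i, c j) : MvPolynomial (α × β) R)).det =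
      ∑ σ : Perm ι, monomial (permMonomial r c σ) ((Perm.sign σ : ℤ) : R) := by
  rw [Matrix.det_apply']
  refine sum_congr rfl fun σ _ => ?_
  rw [permMonomial, monomial_sum_index, map_intCast]
  rfl

theorem mem_support_det_of_X_iff (R : Type*) [CommRing R] [Nontrivial R]
    (hr : Injective r) (hc : Injective c) (ν : α × β →₀ ℕ) :
    ν ∈ (Matrix.of fun i j => (X (r i, c j) : MvPolynomial (α × β) R)).det.support ↔
      ∃ σ, permMonomial r c σ = ν := by
  classical
  simp only [mem_support_iff, det_of_X, coeff_sum, coeff_monomial]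
  constructor
  · intro h
    obtain ⟨σ, -, hσ⟩ := exists_ne_zero_of_sum_ne_zero h
    exact ⟨σ, by_contra fun hne => hσ (if_neg hne)⟩
  · rintro ⟨σ, rfl⟩
    rw [sum_eq_single σ (fun σ' _ hne => if_neg fun h => hne (permMonomial_injective hr hc h))
      (by simp), if_pos rfl]
    rcases Int.units_eq_one_or (Perm.sign σ) with h | h <;> simp [h]

end GenericMatrix

section FinPerm

variable {k : ℕ} {i₀ j₀ : Fin (k + 1)}

theorem exists_perm_succAbove_of_apply_eq {σ : Perm (Fin (k + 1))} (h : σ j₀ = i₀) :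
    ∃ τ : Perm (Fin k), ∀ j, σ (j₀.succAbove j) = i₀.succAbove (τ j) := by
  set π := (finSuccEquiv' j₀).symm.trans (σ.trans (finSuccEquiv' i₀))
  have hπ : π none = none := by simp [π, h]
  refine ⟨removeNone π, fun j => ?_⟩
  have hsome : ∃ a, π (some j) = some a := by
    cases hj : π (some j) with
    | none => exact absurd (π.injective (hj.trans hπ.symm)) (by simp)
    | some a => exact ⟨a, rfl⟩
  have := (removeNone_some π hsome).symm
  apply_fun (finSuccEquiv' i₀).symm at this
  simpa [π] using this

theorem exists_perm_apply_eq_succAbove (τ : Perm (Fin k)) :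
    ∃ σ : Perm (Fin (k + 1)), σ j₀ = i₀ ∧ ∀ j, σ (j₀.succAbove j) = i₀.succAbove (τ j) :=
  ⟨(finSuccEquiv' j₀).trans ((optionCongr τ).trans (finSuccEquiv' i₀).symm), by simp,
    fun j => by simp⟩

variable {α β : Type*} {r : Fin (k + 1) → α} {c : Fin (k + 1) → β}

theorem permMonomial_eq_single_add {σ : Perm (Fin (k + 1))} {τ : Perm (Fin k)}
    (h : σ j₀ = i₀) (hs : ∀ j, σ (j₀.succAbove j) = i₀.succAbove (τ j)) :
    permMonomial r c σ =
      Finsupp.single (r i₀, c j₀) 1 + permMonomial (r ∘ i₀.succAbove) (c ∘ j₀.succAbove) τ := by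
  simp only [permMonomial, Fin.sum_univ_succAbove _ j₀, h, hs, comp_apply]

theorem single_add_mem_support_det_of_X_iff (R : Type*) [CommRing R] [Nontrivial R]
    (hr : Injective r) (hc : Injective c) (ν : α × β →₀ ℕ) :
    Finsupp.single (r i₀, c j₀) 1 + ν ∈
        (Matrix.of fun i j => (X (r i, c j) : MvPolynomial (α × β) R)).det.support ↔
      ν ∈ (Matrix.of fun i j =>
        (X (r (i₀.succAbove i), c (j₀.succAbove j)) : MvPolynomial (α × β) R)).det.support := by
  have hsub := mem_support_det_of_X_iff R (hr.comp (Fin.succAbove_right_injective (p := i₀)))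
    (hc.comp (Fin.succAbove_right_injective (p := j₀))) ν
  simp only [comp_apply] at hsub
  rw [mem_support_det_of_X_iff R hr hc, hsub]
  constructor
  · rintro ⟨σ, hσ⟩
    have h : σ j₀ = i₀ := by
      have := congrArg (· (r i₀, c j₀)) hσ
      simp only [permMonomial_apply hr hc, Finsupp.coe_add, Pi.add_apply,
        Finsupp.single_eq_same] at this
      by_contra hne
      rw [if_neg hne] at this
      omega
    obtain ⟨τ, hs⟩ := exists_perm_succAbove_of_apply_eq h
    exact ⟨τ, add_left_cancel ((permMonomial_eq_single_add h hs).symm.trans hσ)⟩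
  · rintro ⟨τ, rfl⟩
    obtain ⟨σ, h, hs⟩ := exists_perm_apply_eq_succAbove τ
    exact ⟨σ, permMonomial_eq_single_add h hs⟩

end FinPerm

section Enumeration

variable {n m k : ℕ} {A : Finset ℕ}

theorem enumExt_eq_orderEmbOfFin (h : A.card = m) (i : Fin m) :
    enumExt n A i = A.orderEmbOfFin h i := by
  subst h
  simp [enumExt]

theorem enumExt_mem (h : A.card = m) (i : Fin m) : enumExt n A i ∈ A :=
  enumExt_eq_orderEmbOfFin h i ▸ A.orderEmbOfFin_mem h i

theorem enumExt_strictMono (h : A.card = m) : StrictMono fun i : Fin m => enumExt n A i := by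
  simpa only [enumExt_eq_orderEmbOfFin h] using (A.orderEmbOfFin h).strictMono

theorem exists_enumExt_eq (h : A.card = m) {a : ℕ} (ha : a ∈ A) :
    ∃ i : Fin m, enumExt n A i = a := by
  obtain ⟨i, hi⟩ : a ∈ Set.range (A.orderEmbOfFin h) := by rwa [range_orderEmbOfFin]
  exact ⟨i, by rw [enumExt_eq_orderEmbOfFin h, hi]⟩

theorem enumExt_erase (hA : A.card = k + 1) (i₀ : Fin (k + 1)) (j : Fin k) :
    enumExt n (A.erase (enumExt n A i₀)) j = enumExt n A (i₀.succAbove j) := by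
  have hcard : (A.erase (enumExt n A i₀)).card = k := by
    rw [card_erase_of_mem (enumExt_mem hA i₀), hA, Nat.add_sub_cancel]
  have hmem : ∀ j : Fin k, enumExt n A (i₀.succAbove j) ∈ A.erase (enumExt n A i₀) := fun j =>
    mem_erase.2 ⟨fun h => Fin.succAbove_ne i₀ j ((enumExt_strictMono hA).injective h),
      enumExt_mem hA _⟩
  rw [enumExt_eq_orderEmbOfFin hcard, ← orderEmbOfFin_unique hcard hmem
    ((enumExt_strictMono hA).comp (Fin.strictMono_succAbove i₀))]

theorem MAB_erase (K : Type) [Field K] {B : Finset ℕ} (hA : A.card = k + 1) (hB : B.card = k + 1)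
    (i₀ j₀ : Fin (k + 1)) :
    MAB K n (A.erase (enumExt n A i₀)) (B.erase (enumExt n B j₀)) k =
      Matrix.of fun i j => X (enumExt n A (i₀.succAbove i), enumExt n B (j₀.succAbove j)) := by
  ext i j
  simp [MAB, enumExt_erase hA, enumExt_erase hB]

end Enumeration

theorem stmt_6_general (K : Type) [Field K] (n k : ℕ)
    (A B : Finset ℕ)
    (hA : A.card = k + 1) (hB : B.card = k + 1)
    (lt : ((ℕ × ℕ) →₀ ℕ) → ((ℕ × ℕ) →₀ ℕ) → Prop)
    (hirr : ∀ μ, ¬ lt μ μ)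
    (htrans : ∀ μ ν τ, lt μ ν → lt ν τ → lt μ τ)
    (htotal : ∀ μ ν, μ ≠ ν → lt μ ν ∨ lt ν μ)
    (hadd : ∀ μ ν τ, lt μ ν → lt (μ + τ) (ν + τ))
    (x y : ℕ) (hx : x ∈ A) (hy : y ∈ B)
    (μ : (ℕ × ℕ) →₀ ℕ)
    (hμ : μ ∈ (MAB K n A B (k + 1)).det.support)
    (hμmax : ∀ ν ∈ (MAB K n A B (k + 1)).det.support, ν ≠ μ → lt ν μ)
    (hdiv : 1 ≤ μ (x, y)) :
    (μ - Finsupp.single (x, y) 1) ∈ (MAB K n (A.erase x) (B.erase y) k).det.support ∧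
    ∀ ν ∈ (MAB K n (A.erase x) (B.erase y) k).det.support,
      ν ≠ μ - Finsupp.single (x, y) 1 → lt ν (μ - Finsupp.single (x, y) 1) := by
  obtain ⟨i₀, rfl⟩ := exists_enumExt_eq (n := n) hA hx
  obtain ⟨j₀, rfl⟩ := exists_enumExt_eq (n := n) hB hy
  refine IsLeading.of_add_left lt hirr htrans htotal hadd
    (S := ↑(MAB K n A B (k + 1)).det.support) (fun ν => ?_) ⟨hμ, hμmax⟩
    (add_tsub_cancel_of_le (Finsupp.single_le_iff.2 hdiv)).symm
  rw [Finset.mem_coe, Finset.mem_coe, MAB_erase K hA hB]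
  exact (single_add_mem_support_det_of_X_iff K (enumExt_strictMono hA).injective
    (enumExt_strictMono hB).injective ν).symm

/-- If `x_{a_i,b_j}` divides the leading monomial of `det M(A,B)` with respect to a term
order `≺` (an irreflexive, transitive, total, addition-compatible order on exponent
vectors), then `lm(det M(A∖{a_i}, B∖{b_j})) · x_{a_i,b_j} = lm(det M(A,B))`;
the leading monomial is characterized as the monomial of the support all of whose fellow
support elements are `≺`-smaller. -/
theorem stmt_6 (K : Type) [Field K] (n k : ℕ) (hk : 1 ≤ k) (hkn : k < n)
    (A B : Finset ℕ) (hAn : A ⊆ Finset.Icc 1 n) (hBn : B ⊆ Finset.Icc 1 n)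
    (hA : A.card = k + 1) (hB : B.card = k + 1)
    (lt : ((ℕ × ℕ) →₀ ℕ) → ((ℕ × ℕ) →₀ ℕ) → Prop)
    (hirr : ∀ μ, ¬ lt μ μ)
    (htrans : ∀ μ ν τ, lt μ ν → lt ν τ → lt μ τ)
    (htotal : ∀ μ ν, μ ≠ ν → lt μ ν ∨ lt ν μ)
    (hadd : ∀ μ ν τ, lt μ ν → lt (μ + τ) (ν + τ))
    (x y : ℕ) (hx : x ∈ A) (hy : y ∈ B)
    (μ : (ℕ × ℕ) →₀ ℕ)
    (hμ : μ ∈ (MAB K n A B (k + 1)).det.support)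
    (hμmax : ∀ ν ∈ (MAB K n A B (k + 1)).det.support, ν ≠ μ → lt ν μ)
    (hdiv : 1 ≤ μ (x, y)) :
    (μ - Finsupp.single (x, y) 1) ∈ (MAB K n (A.erase x) (B.erase y) k).det.support ∧
    ∀ ν ∈ (MAB K n (A.erase x) (B.erase y) k).det.support,
      ν ≠ μ - Finsupp.single (x, y) 1 → lt ν (μ - Finsupp.single (x, y) 1) :=
  stmt_6_general K n k A B hA hB lt hirr htrans htotal hadd x y hx hy μ hμ hμmax hdiv
end

section
/- There exists an element (i,j) ∈ N(A,B) such that x_{ij} divides the leading monomial of det M(A,B) with respect to the order ≼. -/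
/-- The rank function `φ(i,j) = [((2−i)n + (j−1)(n−1) − 1) mod n²] + 1` on the
variables `x_{ij}`, `1 ≤ i,j ≤ n`. -/
def phiOrd (n : ℕ) (p : ℕ × ℕ) : ℕ :=
  (((2 - (p.1 : ℤ)) * n + ((p.2 : ℤ) - 1) * ((n : ℤ) - 1) - 1) % ((n ^ 2 : ℕ) : ℤ)).toNat + 1

/-- Total degree of a monomial exponent vector. -/
def degSum (μ : (ℕ × ℕ) →₀ ℕ) : ℕ := μ.sum fun _ e => e

/-- `μ ≺ ν` in the graded reverse-lexicographic order induced by ordering the variables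
according to `φ`: smaller total degree, or equal total degree and `μ` has a strictly
larger exponent at the `φ`-smallest variable where they differ. -/
def GrevlexLT (n : ℕ) (μ ν : (ℕ × ℕ) →₀ ℕ) : Prop :=
  degSum μ < degSum ν ∨
    (degSum μ = degSum ν ∧
      ∃ p, ν p < μ p ∧ ∀ q, phiOrd n q < phiOrd n p → μ q = ν q)





/-- the "wrapped diagonal" value of a position -/
def cval (n x y : ℕ) : ℕ := if x ≤ y then y - x else n - (x - y)

lemma phiOrd_eq (n x y : ℕ) (hx1 : 1 ≤ x) (hxn : x ≤ n) (hy1 : 1 ≤ y) (hyn : y ≤ n) :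
    phiOrd n (x, y) = n * cval n x y + (n - y) + 1 := by
  have hkey : ((2 - (x : ℤ)) * n + ((y : ℤ) - 1) * ((n : ℤ) - 1) - 1)
      = (n : ℤ) * ((y : ℤ) - x + 1) - y := by ring
  unfold phiOrd cval
  simp only [hkey]
  rcases le_or_gt x y with h | h
  · rw [if_pos h]
    have h2 : (n : ℤ) * ((y : ℤ) - x + 1) - y = ((n * (y - x) + (n - y) : ℕ) : ℤ) := by
      push_cast [h, hyn]
      ring
    rw [h2, Int.emod_eq_of_lt (by positivity) ?_, Int.toNat_natCast]
    have hc : y - x + 1 ≤ n := by omega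
    have : n * (y - x) + (n - y) < n * n := by
      have := Nat.mul_le_mul_left n hc
      have hn1 : 1 ≤ n := le_trans hy1 hyn
      calc n * (y - x) + (n - y) < n * (y - x) + n := by omega
        _ = n * (y - x + 1) := by ring
        _ ≤ n * n := Nat.mul_le_mul_left n hc
    rw [show ((n:ℕ)^2 : ℕ) = n * n by ring]
    exact_mod_cast this
  · rw [if_neg (by omega)]
    have h2 : (n : ℤ) * ((y : ℤ) - x + 1) - y + ((n^2 : ℕ) : ℤ)
        = ((n * (n - (x - y)) + (n - y) : ℕ) : ℤ) := by
      rw [Nat.cast_add, Nat.cast_mul, Nat.cast_sub (show y ≤ n from hyn),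
        Nat.cast_sub (show x - y ≤ n by omega), Nat.cast_sub (show y ≤ x by omega)]
      push_cast
      ring
    have h3 : ((n : ℤ) * ((y : ℤ) - x + 1) - y) % ((n^2 : ℕ) : ℤ)
        = ((n : ℤ) * ((y : ℤ) - x + 1) - y + ((n^2 : ℕ) : ℤ)) % ((n^2 : ℕ) : ℤ) := by
      simp [Int.add_emod]
    rw [h3, h2, Int.emod_eq_of_lt (by positivity) ?_, Int.toNat_natCast]
    have hc : n - (x - y) + 1 ≤ n := by omega
    have : n * (n - (x - y)) + (n - y) < n * n := by
      calc n * (n - (x - y)) + (n - y) < n * (n - (x - y)) + n := by omega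
        _ = n * (n - (x - y) + 1) := by ring
        _ ≤ n * n := Nat.mul_le_mul_left n hc
    rw [show ((n:ℕ)^2 : ℕ) = n * n by ring]
    exact_mod_cast this

lemma lex_aux {n c1 c2 d1 d2 : ℕ} (h1 : d1 < n) (h2 : d2 < n)
    (h : c1 < c2 ∨ (c1 = c2 ∧ d1 < d2)) : n * c1 + d1 < n * c2 + d2 := by
  rcases h with h | ⟨rfl, h⟩
  · have h3 : n * (c1 + 1) ≤ n * c2 := Nat.mul_le_mul_left n h
    rw [Nat.mul_succ] at h3
    omega
  · omega

/-- above vs above comparison -/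
lemma phi_lt_aa {n x1 y1 x2 y2 : ℕ} (ha1 : x1 ≤ y1) (ha2 : x2 ≤ y2)
    (hx1 : 1 ≤ x1) (hy1 : y1 ≤ n) (hx2 : 1 ≤ x2) (hy2 : y2 ≤ n)
    (h : y1 + x2 < y2 + x1) : phiOrd n (x1, y1) < phiOrd n (x2, y2) := by
  rw [phiOrd_eq n x1 y1 hx1 (le_trans ha1 hy1) (le_trans hx1 ha1) hy1,
      phiOrd_eq n x2 y2 hx2 (le_trans ha2 hy2) (le_trans hx2 ha2) hy2]
  unfold cval
  rw [if_pos ha1, if_pos ha2]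
  have := lex_aux (n := n) (c1 := y1 - x1) (c2 := y2 - x2) (d1 := n - y1) (d2 := n - y2)
    (by omega) (by omega) (by omega)
  omega

/-- below vs below comparison -/
lemma phi_lt_bb {n x1 y1 x2 y2 : ℕ} (ha1 : y1 < x1) (ha2 : y2 < x2)
    (hy1 : 1 ≤ y1) (hx1 : x1 ≤ n) (hy2 : 1 ≤ y2) (hx2 : x2 ≤ n)
    (h : x2 + y1 < x1 + y2) : phiOrd n (x1, y1) < phiOrd n (x2, y2) := by
  rw [phiOrd_eq n x1 y1 (le_trans hy1 (le_of_lt ha1)) hx1 hy1 (le_trans (le_of_lt ha1) hx1),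
      phiOrd_eq n x2 y2 (le_trans hy2 (le_of_lt ha2)) hx2 hy2 (le_trans (le_of_lt ha2) hx2)]
  unfold cval
  rw [if_neg (by omega), if_neg (by omega)]
  have := lex_aux (n := n) (c1 := n - (x1 - y1)) (c2 := n - (x2 - y2)) (d1 := n - y1) (d2 := n - y2)
    (by omega) (by omega) (by omega)
  omega

/-- above vs below comparison -/
lemma phi_lt_ab {n x1 y1 x2 y2 : ℕ} (ha1 : x1 ≤ y1) (ha2 : y2 < x2)
    (hx1 : 1 ≤ x1) (hy1 : y1 ≤ n) (hy2 : 1 ≤ y2) (hx2 : x2 ≤ n)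
    (h : y1 + x2 < n + x1 + y2) : phiOrd n (x1, y1) < phiOrd n (x2, y2) := by
  rw [phiOrd_eq n x1 y1 hx1 (le_trans ha1 hy1) (le_trans hx1 ha1) hy1,
      phiOrd_eq n x2 y2 (le_trans hy2 (le_of_lt ha2)) hx2 hy2 (le_trans (le_of_lt ha2) hx2)]
  unfold cval
  rw [if_pos ha1, if_neg (by omega)]
  have := lex_aux (n := n) (c1 := y1 - x1) (c2 := n - (x2 - y2)) (d1 := n - y1) (d2 := n - y2)
    (by omega) (by omega) (by omega)
  omega

section Comb

variable {n m L : ℕ} {a b : ℕ → ℕ}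

lemma mod_eq_sub' {x m : ℕ} (h1 : m ≤ x) (h2 : x < 2*m) : x % m = x - m := by
  rw [Nat.mod_eq_sub_mod h1, Nat.mod_eq_of_lt (by omega)]

/-- fact (F3): positions on the wrapped part of the `ℓ`-diagonal are weakly above
the main diagonal. -/
lemma F3 (hmn : m ≤ n)
    (hainc : ∀ i j, i ≤ j → j < m → a i + (j - i) ≤ a j)
    (hbinc : ∀ i j, i ≤ j → j < m → b i + (j - i) ≤ b j)
    (hW : 1 ≤ L → ∃ w, w + L ≤ m ∧ a (w + L - 1) ≤ b w)
    (i : ℕ) (hi : i < m) (hiL : m ≤ i + L) : a (i + L - m) ≤ b i := by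
  obtain ⟨w, hwL, hwb⟩ := hW (by omega)
  have h1 : b w + (i - w) ≤ b i := hbinc w i (by omega) hi
  have h2 : a (i + L - m) + ((w + L - 1) - (i + L - m)) ≤ a (w + L - 1) :=
    hainc _ _ (by omega) (by omega)
  omega

/-- Lemma C: every position of the `ℓ`-shift diagonal is φ-beaten by some position of
the `t`-shift diagonal, for `t ≠ ℓ mod m`. -/
lemma LemC (hm : 2 ≤ m) (hmn : m ≤ n)
    (ha1 : ∀ i, i < m → 1 ≤ a i) (han : ∀ i, i < m → a i ≤ n)
    (hb1 : ∀ i, i < m → 1 ≤ b i) (hbn : ∀ i, i < m → b i ≤ n)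
    (hainc : ∀ i j, i ≤ j → j < m → a i + (j - i) ≤ a j)
    (hbinc : ∀ i j, i ≤ j → j < m → b i + (j - i) ≤ b j)
    (hLle : L ≤ m)
    (hL : ∀ i, i + L < m → b i < a (i + L))
    (hW : 1 ≤ L → ∃ w, w + L ≤ m ∧ a (w + L - 1) ≤ b w)
    (t : ℕ) (ht : t < m) (htne : t ≠ L % m) (i : ℕ) (hi : i < m) :
    ∃ j, j < m ∧
      phiOrd n (a ((j + t) % m), b j) < phiOrd n (a ((i + L) % m), b i) := by
  have haR : ∀ r s, r < m → s < m → a r < a s → r < s := by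
    intro r s hr hs hlt
    by_contra hc
    have := hainc s r (by omega) hr
    omega
  have htL' : t ≠ L := by
    intro h
    subst h
    exact htne (Nat.mod_eq_of_lt ht).symm
  rcases lt_or_gt_of_ne htL' with htL | htL
  · -- t < L
    obtain ⟨w, hwL, hwb⟩ := hW (by omega)
    -- interval fact: for w ≤ j with j + t + 1 ≤ w + L, position (a (j+t), b j) is above
    have hI : ∀ j, w ≤ j → j + t + 1 ≤ w + L → a (j + t) ≤ b j := by
      intro j hwj hjt
      have h1 : b w + (j - w) ≤ b j := hbinc w j hwj (by omega)
      have h2 : a (j + t) + ((w + L - 1) - (j + t)) ≤ a (w + L - 1) :=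
        hainc _ _ (by omega) (by omega)
      omega
    by_cases hiL : i + L < m
    · -- p is below the diagonal
      rw [Nat.mod_eq_of_lt hiL]
      by_cases hwi : w ≤ i
      · refine ⟨w, by omega, ?_⟩
        rw [Nat.mod_eq_of_lt (show w + t < m by omega)]
        have hq : a (w + t) ≤ b w := hI w le_rfl (by omega)
        have hbwi : b w + (i - w) ≤ b i := hbinc w i hwi hi
        exact phi_lt_ab hq (hL i hiL) (ha1 _ (by omega)) (hbn _ (by omega))
          (hb1 _ hi) (han _ (by omega)) (by have := han _ hiL; have := ha1 _ (show w + t < m by omega); omega)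
      · refine ⟨max w (i + L - t), by omega, ?_⟩
        set j := max w (i + L - t) with hj
        have hjI : j + t + 1 ≤ w + L := by omega
        rw [Nat.mod_eq_of_lt (show j + t < m by omega)]
        have hq : a (j + t) ≤ b j := hI j (le_max_left _ _) hjI
        have hge : a (i + L) + ((j + t) - (i + L)) ≤ a (j + t) := hainc _ _ (by omega) (by omega)
        exact phi_lt_ab hq (hL i hiL) (ha1 _ (by omega)) (hbn _ (by omega))
          (hb1 _ hi) (han _ (by omega))
          (by have := hbn j (by omega); have := hb1 i hi; omega)
    · -- p is (weakly) above the diagonal, wrapped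
      rw [mod_eq_sub' (by omega) (by omega)]
      have hp : a (i + L - m) ≤ b i := F3 hmn hainc hbinc hW i hi (by omega)
      refine ⟨max w (i + L - m - t), by omega, ?_⟩
      set j := max w (i + L - m - t) with hj
      have hjle : j ≤ i := by omega
      have hjI : j + t + 1 ≤ w + L := by omega
      rw [Nat.mod_eq_of_lt (show j + t < m by omega)]
      have hq : a (j + t) ≤ b j := hI j (le_max_left _ _) hjI
      have h1 : b j + (i - j) ≤ b i := hbinc j i hjle hi
      have h2 : a (i + L - m) + ((j + t) - (i + L - m)) ≤ a (j + t) :=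
        hainc _ _ (by omega) (by omega)
      have hnz : L < t + m := by
        rcases Nat.eq_or_lt_of_le hLle with h | h
        · rw [h] at htne ⊢
          have : t ≠ 0 := by simpa [Nat.mod_self] using htne
          omega
        · omega
      exact phi_lt_aa hq hp (ha1 _ (by omega)) (hbn _ (by omega))
        (ha1 _ (by omega)) (hbn _ hi) (by omega)
  · -- t > L
    by_cases hiL : i + L < m
    · -- p below
      rw [Nat.mod_eq_of_lt hiL]
      by_cases hit : i + t < m
      · refine ⟨i, hi, ?_⟩
        rw [Nat.mod_eq_of_lt hit]
        have hq : b i < a (i + t) := by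
          have := hL i hiL
          have := hainc (i + L) (i + t) (by omega) hit
          omega
        have hstr : a (i + L) + (i + t - (i + L)) ≤ a (i + t) := hainc _ _ (by omega) hit
        exact phi_lt_bb hq (hL i hiL) (hb1 _ hi) (han _ hit) (hb1 _ hi) (han _ hiL)
          (by omega)
      · refine ⟨m - 1 - t, by omega, ?_⟩
        rw [Nat.mod_eq_of_lt (show m - 1 - t + t < m by omega)]
        have hj1 : m - 1 - t + t = m - 1 := by omega
        rw [hj1]
        have hq : b (m - 1 - t) < a (m - 1) := by
          have h1 := hL (m - 1 - t) (by omega)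
          have h2 : a (m - 1 - t + L) + ((m-1) - (m - 1 - t + L)) ≤ a (m - 1) :=
            hainc _ _ (by omega) (by omega)
          omega
        have h2 : a (i + L) + ((m - 1) - (i + L)) ≤ a (m - 1) := hainc _ _ (by omega) (by omega)
        have h3 : b (m - 1 - t) + (i - (m - 1 - t)) ≤ b i := hbinc _ _ (by omega) hi
        exact phi_lt_bb hq (hL i hiL) (hb1 _ (by omega)) (han _ (by omega)) (hb1 _ hi)
          (han _ hiL) (by omega)
    · -- p above, wrapped; here L ≥ 1 and i ≥ m - L, i + t ≥ m
      rw [mod_eq_sub' (by omega) (by omega)]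
      have hp : a (i + L - m) ≤ b i := F3 hmn hainc hbinc hW i hi (by omega)
      by_cases hcase : a (i + t - m) ≤ b i
      · refine ⟨i, hi, ?_⟩
        rw [mod_eq_sub' (by omega) (by omega)]
        have hstr : a (i + L - m) + ((i + t - m) - (i + L - m)) ≤ a (i + t - m) :=
          hainc _ _ (by omega) (by omega)
        exact phi_lt_aa hcase hp (ha1 _ (by omega)) (hbn _ hi) (ha1 _ (by omega)) (hbn _ hi)
          (by omega)
      · -- crossing argument
        push_neg at hcase
        have hex : ∃ x, i + L ≤ x + t ∧ x < i ∧ a (x + t - m) ≤ b x := by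
          by_contra h'
          push_neg at h'
          obtain ⟨w, hwL, hwb⟩ := hW (by omega)
          -- w is below the window
          have hwlow : w + t < i + L := by
            by_contra hc
            push_neg at hc
            have hwi : w ≤ i := by omega
            have hbw : b w < a (w + t - m) := by
              rcases eq_or_lt_of_le hwi with rfl | hlt
              · exact hcase
              · exact h' w hc hlt
            have : a (w + L - 1) < a (w + t - m) := by omega
            have := haR _ _ (by omega) (by omega) this
            omega
          have hx0 := h' (i + L - t) (by omega) (by omega)
          have hx0i : i + L - t + t - m = i + L - m := by omega
          rw [hx0i] at hx0
          have h1 : b w + ((i + L - t) - w) ≤ b (i + L - t) := hbinc _ _ (by omega) (by omega)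
          have h2 : a (i + L - m) + ((w + L - 1) - (i + L - m)) ≤ a (w + L - 1) :=
            hainc _ _ (by omega) (by omega)
          omega
        obtain ⟨x, hx1, hx2, hx3⟩ := hex
        refine ⟨x, by omega, ?_⟩
        rw [mod_eq_sub' (by omega) (by omega)]
        have h1 : b x + (i - x) ≤ b i := hbinc _ _ (by omega) hi
        have h2 : a (i + L - m) + ((x + t - m) - (i + L - m)) ≤ a (x + t - m) :=
          hainc _ _ (by omega) (by omega)
        exact phi_lt_aa hx3 hp (ha1 _ (by omega)) (hbn _ (by omega)) (ha1 _ (by omega))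
          (hbn _ hi) (by omega)

end Comb

section Shift

open Finset

variable {n m : ℕ} {a b : ℕ → ℕ}

/-- Lemma B: an exchange-stable matching is a cyclic shift. -/
lemma LemB (hm : 1 ≤ m)
    (ha1 : ∀ i, i < m → 1 ≤ a i) (han : ∀ i, i < m → a i ≤ n)
    (hb1 : ∀ i, i < m → 1 ≤ b i) (hbn : ∀ i, i < m → b i ≤ n)
    (hainc : ∀ i j, i ≤ j → j < m → a i + (j - i) ≤ a j)
    (hbinc : ∀ i j, i ≤ j → j < m → b i + (j - i) ≤ b j)
    (σ : Equiv.Perm (Fin m))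
    (hstab : ∀ i j : Fin m, i ≠ j →
      (phiOrd n (a (σ i : ℕ), b (j : ℕ)) ≤ phiOrd n (a (σ i : ℕ), b (i : ℕ)) ∧
        phiOrd n (a (σ i : ℕ), b (j : ℕ)) ≤ phiOrd n (a (σ j : ℕ), b (j : ℕ))) ∨
      (phiOrd n (a (σ j : ℕ), b (i : ℕ)) ≤ phiOrd n (a (σ i : ℕ), b (i : ℕ)) ∧
        phiOrd n (a (σ j : ℕ), b (i : ℕ)) ≤ phiOrd n (a (σ j : ℕ), b (j : ℕ)))) :
    ∃ u, u < m ∧ ∀ i : Fin m, ((σ i : ℕ)) = ((i : ℕ) + u) % m := by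
  have hastr : ∀ x y : Fin m, x < y → a (x : ℕ) < a (y : ℕ) := by
    intro x y hxy
    have h1 := hainc (x : ℕ) (y : ℕ) (le_of_lt hxy) y.isLt
    have h2 : (x:ℕ) < (y:ℕ) := hxy
    omega
  have hbstr : ∀ x y : Fin m, x < y → b (x : ℕ) < b (y : ℕ) := by
    intro x y hxy
    have h1 := hbinc (x : ℕ) (y : ℕ) (le_of_lt hxy) y.isLt
    have h2 : (x:ℕ) < (y:ℕ) := hxy
    omega
  classical
  set P : Fin m → Prop := fun i => b (i : ℕ) < a (σ i : ℕ) with hP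
  -- h1 : two below positions are diagonally ordered
  have h1 : ∀ i j : Fin m, P i → P j → i < j → σ i < σ j := by
    intro i j hPi hPj hij
    by_contra hc
    push_neg at hc
    have hne : σ j ≠ σ i := fun h => absurd (σ.injective h) (by intro h'; subst h'; exact lt_irrefl _ hij)
    have hlt : σ j < σ i := lt_of_le_of_ne hc hne
    have ha' : a (σ j : ℕ) < a (σ i : ℕ) := hastr _ _ hlt
    have hb' : b (i:ℕ) < b (j:ℕ) := hbstr i j hij
    have hc1 : phiOrd n (a (σ i : ℕ), b (i:ℕ)) < phiOrd n (a (σ i : ℕ), b (j:ℕ)) :=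
      phi_lt_bb hPi (by omega) (hb1 _ i.isLt) (han _ (σ i).isLt) (hb1 _ j.isLt)
        (han _ (σ i).isLt) (by omega)
    have hc2 : phiOrd n (a (σ i : ℕ), b (i:ℕ)) < phiOrd n (a (σ j : ℕ), b (i:ℕ)) :=
      phi_lt_bb hPi (by omega) (hb1 _ i.isLt) (han _ (σ i).isLt) (hb1 _ i.isLt)
        (han _ (σ j).isLt) (by omega)
    rcases hstab i j (by intro h; subst h; exact lt_irrefl _ hij) with ⟨hA, _⟩ | ⟨hA, _⟩
    · omega
    · omega
  -- h2 : two above positions are diagonally ordered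
  have h2 : ∀ i j : Fin m, ¬P i → ¬P j → i < j → σ i < σ j := by
    intro i j hPi hPj hij
    by_contra hc
    push_neg at hc
    have hne : σ j ≠ σ i := fun h => absurd (σ.injective h) (by intro h'; subst h'; exact lt_irrefl _ hij)
    have hlt : σ j < σ i := lt_of_le_of_ne hc hne
    have ha' : a (σ j : ℕ) < a (σ i : ℕ) := hastr _ _ hlt
    have hb' : b (i:ℕ) < b (j:ℕ) := hbstr i j hij
    have hPi' : a (σ i : ℕ) ≤ b (i:ℕ) := not_lt.mp hPi
    have hc1 : phiOrd n (a (σ i : ℕ), b (i:ℕ)) < phiOrd n (a (σ i : ℕ), b (j:ℕ)) :=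
      phi_lt_aa hPi' (by omega) (ha1 _ (σ i).isLt) (hbn _ i.isLt) (ha1 _ (σ i).isLt)
        (hbn _ j.isLt) (by omega)
    have hc2 : phiOrd n (a (σ i : ℕ), b (i:ℕ)) < phiOrd n (a (σ j : ℕ), b (i:ℕ)) :=
      phi_lt_aa hPi' (by omega) (ha1 _ (σ i).isLt) (hbn _ i.isLt) (ha1 _ (σ j).isLt)
        (hbn _ i.isLt) (by omega)
    rcases hstab i j (by intro h; subst h; exact lt_irrefl _ hij) with ⟨hA, _⟩ | ⟨hA, _⟩
    · omega
    · omega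
  -- h3 : above-row < below-row, above-col > below-col
  have h3 : ∀ i j : Fin m, ¬P i → P j → σ i < σ j ∧ j < i := by
    intro i j hPi hPj
    have hne : i ≠ j := fun h => hPi (h ▸ hPj)
    have hPi' : a (σ i : ℕ) ≤ b (i:ℕ) := not_lt.mp hPi
    have hpart1 : σ i < σ j := by
      by_contra hc
      push_neg at hc
      have hne' : σ j ≠ σ i := fun h => hne (σ.injective h).symm
      have hlt : σ j < σ i := lt_of_le_of_ne hc hne'
      have ha' : a (σ j : ℕ) < a (σ i : ℕ) := hastr _ _ hlt
      have hc1 : phiOrd n (a (σ i : ℕ), b (i:ℕ)) < phiOrd n (a (σ j : ℕ), b (i:ℕ)) :=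
        phi_lt_aa hPi' (by omega) (ha1 _ (σ i).isLt) (hbn _ i.isLt) (ha1 _ (σ j).isLt)
          (hbn _ i.isLt) (by omega)
      have hc2 : phiOrd n (a (σ i : ℕ), b (i:ℕ)) < phiOrd n (a (σ i : ℕ), b (j:ℕ)) :=
        phi_lt_ab hPi' (by omega) (ha1 _ (σ i).isLt) (hbn _ i.isLt) (hb1 _ j.isLt)
          (han _ (σ i).isLt)
          (by have := hbn (i:ℕ) i.isLt; have := hb1 (j:ℕ) j.isLt; omega)
      rcases hstab i j hne with ⟨hA, _⟩ | ⟨hA, _⟩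
      · omega
      · omega
    refine ⟨hpart1, ?_⟩
    by_contra hc
    push_neg at hc
    have hij : i < j := lt_of_le_of_ne hc hne
    have hb' : b (i:ℕ) < b (j:ℕ) := hbstr i j hij
    have hc1 : phiOrd n (a (σ i : ℕ), b (i:ℕ)) < phiOrd n (a (σ i : ℕ), b (j:ℕ)) :=
      phi_lt_aa hPi' (by omega) (ha1 _ (σ i).isLt) (hbn _ i.isLt) (ha1 _ (σ i).isLt)
        (hbn _ j.isLt) (by omega)
    have hPj' : b (j:ℕ) < a (σ j : ℕ) := hPj
    have hc2 : phiOrd n (a (σ i : ℕ), b (i:ℕ)) < phiOrd n (a (σ j : ℕ), b (i:ℕ)) :=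
      phi_lt_ab hPi' (by omega) (ha1 _ (σ i).isLt) (hbn _ i.isLt) (hb1 _ i.isLt)
        (han _ (σ j).isLt)
        (by have := han (σ j : ℕ) (σ j).isLt; have := ha1 (σ i : ℕ) (σ i).isLt; omega)
    rcases hstab i j hne with ⟨hA, _⟩ | ⟨hA, _⟩
    · omega
    · omega
  -- counting
  set D : Finset (Fin m) := Finset.univ.filter (fun i => P i) with hD
  set d : ℕ := D.card with hd
  have hcard : ∀ i : Fin m, ((σ i : ℕ)) = (Finset.univ.filter (fun j => σ j < σ i)).card := by
    intro i
    have := Finset.card_bij (s := Finset.univ.filter (fun j => σ j < σ i))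
      (t := Finset.Iio (σ i)) (fun j _ => σ j)
      (by intro j hj; simp only [Finset.mem_filter] at hj; exact Finset.mem_Iio.mpr hj.2)
      (by intro j1 _ j2 _ h; exact σ.injective h)
      (by intro ρ hρ
          exact ⟨σ.symm ρ, Finset.mem_filter.mpr ⟨Finset.mem_univ _, by
            simpa using Finset.mem_Iio.mp hρ⟩, by simp⟩)
    rw [this, Fin.card_Iio]
  have hnotcard : (Finset.univ.filter (fun j => ¬ P j)).card = m - d := by
    rw [Finset.filter_not, Finset.card_sdiff_of_subset (Finset.filter_subset _ _), Finset.card_univ,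
      Fintype.card_fin]
  -- the value formula
  have hvalP : ∀ i : Fin m, P i → (σ i : ℕ) = m - d + (i:ℕ) ∧ (i:ℕ) < d := by
    intro i hPi
    have hset : Finset.univ.filter (fun j => σ j < σ i)
        = Finset.univ.filter (fun j => ¬ P j) ∪ Finset.univ.filter (fun j => j < i) := by
      ext j
      simp only [Finset.mem_filter, Finset.mem_union, Finset.mem_univ, true_and]
      constructor
      · intro hj
        by_cases hPj : P j
        · rcases lt_trichotomy j i with h | h | h
          · exact Or.inr h
          · exact absurd hj (by subst h; exact lt_irrefl _)
          · exact absurd (h1 i j hPi hPj h) (by omega)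
        · exact Or.inl hPj
      · rintro (hj | hj)
        · exact (h3 j i hj hPi).1
        · exact h1 j i (by
            by_contra hPj
            exact absurd (h3 j i hPj hPi).2 (by omega)) hPi hj
    have hdisj : Disjoint (Finset.univ.filter (fun j => ¬ P j))
        (Finset.univ.filter (fun j => j < i)) := by
      rw [Finset.disjoint_left]
      intro j hj1 hj2
      simp only [Finset.mem_filter, Finset.mem_univ, true_and] at hj1 hj2
      exact absurd (h3 j i hj1 hPi).2 (by omega)
    have hIio : (Finset.univ.filter (fun j => j < i)).card = (i : ℕ) := by
      rw [show Finset.univ.filter (fun j => j < i) = Finset.Iio i from by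
        ext j; simp [Finset.mem_Iio], Fin.card_Iio]
    have hlt : (i : ℕ) < d := by
      have hsub : Finset.Iic i ⊆ D := by
        intro j hj
        simp only [hD, Finset.mem_filter, Finset.mem_univ, true_and]
        rcases lt_or_eq_of_le (Finset.mem_Iic.mp hj) with h | h
        · by_contra hPj
          exact absurd (h3 j i hPj hPi).2 (by omega)
        · subst h; exact hPi
      have := Finset.card_le_card hsub
      rw [Fin.card_Iic] at this
      omega
    refine ⟨?_, hlt⟩
    rw [hcard i, hset, Finset.card_union_of_disjoint hdisj, hnotcard, hIio]
  have hvalN : ∀ i : Fin m, ¬ P i → (σ i : ℕ) = (i:ℕ) - d ∧ d ≤ (i:ℕ) := by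
    intro i hPi
    have hset : Finset.univ.filter (fun j => σ j < σ i)
        = Finset.univ.filter (fun j => j < i) \ D := by
      ext j
      simp only [hD, Finset.mem_filter, Finset.mem_sdiff, Finset.mem_univ, true_and]
      constructor
      · intro hj
        have hPj : ¬ P j := by
          intro hPj
          exact absurd (h3 i j hPi hPj).1 (by omega)
        refine ⟨?_, hPj⟩
        rcases lt_trichotomy j i with h | h | h
        · exact h
        · exact absurd hj (by subst h; exact lt_irrefl _)
        · exact absurd (h2 i j hPi hPj h) (by omega)
      · rintro ⟨hj1, hj2⟩
        exact h2 j i hj2 hPi hj1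
    have hsub : D ⊆ Finset.univ.filter (fun j => j < i) := by
      intro j hj
      simp only [hD, Finset.mem_filter, Finset.mem_univ, true_and] at hj ⊢
      exact (h3 i j hPi hj).2
    have hIio : (Finset.univ.filter (fun j => j < i)).card = (i : ℕ) := by
      rw [show Finset.univ.filter (fun j => j < i) = Finset.Iio i from by
        ext j; simp [Finset.mem_Iio], Fin.card_Iio]
    have hdle : d ≤ (i : ℕ) := by
      have := Finset.card_le_card hsub
      rw [hIio] at this
      exact this
    refine ⟨?_, hdle⟩
    rw [hcard i, hset, Finset.card_sdiff_of_subset hsub, hIio]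
  have hdm : d ≤ m := by
    have := Finset.card_le_card (Finset.filter_subset (fun i => P i) Finset.univ)
    simp only [Finset.card_univ, Fintype.card_fin] at this
    exact this
  refine ⟨(m - d) % m, Nat.mod_lt _ (by omega), ?_⟩
  intro i
  by_cases hPi : P i
  · obtain ⟨hv, hlt⟩ := hvalP i hPi
    have hd1 : 1 ≤ d := by omega
    rw [Nat.mod_eq_of_lt (show m - d < m by omega),
      Nat.mod_eq_of_lt (show (i:ℕ) + (m - d) < m by omega)]
    omega
  · obtain ⟨hv, hle⟩ := hvalN i hPi
    rcases Nat.eq_zero_or_pos d with hd0 | hd1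
    · have heq : ((i:ℕ) + (m - d) % m) % m = (i:ℕ) := by
        rw [hd0, Nat.sub_zero, Nat.mod_self, Nat.add_zero, Nat.mod_eq_of_lt i.isLt]
      rw [heq]
      omega
    · rw [Nat.mod_eq_of_lt (show m - d < m by omega),
        mod_eq_sub' (by omega) (by have := i.isLt; omega)]
      omega

end Shift

section Det

open MvPolynomial

variable {K : Type} [Field K] {m : ℕ}

/-- The exponent vector of the squarefree monomial with support `f '' univ`. -/
noncomputable def MonoOf (f : Fin m → ℕ × ℕ) : (ℕ × ℕ) →₀ ℕ :=
  ∑ i : Fin m, Finsupp.single (f i) 1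

lemma monoOf_apply (f : Fin m → ℕ × ℕ) (q : ℕ × ℕ) :
    MonoOf f q = ∑ i : Fin m, if f i = q then 1 else 0 := by
  classical
  unfold MonoOf
  rw [Finsupp.finset_sum_apply]
  refine Finset.sum_congr rfl fun i _ => ?_
  rw [Finsupp.single_apply]

lemma monoOf_self (f : Fin m → ℕ × ℕ) (i : Fin m) : 1 ≤ MonoOf f (f i) := by
  classical
  rw [monoOf_apply]
  calc (1 : ℕ) = if f i = f i then 1 else 0 := by rw [if_pos rfl]
    _ ≤ ∑ j : Fin m, if f j = f i then 1 else 0 :=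
        Finset.single_le_sum (f := fun j => if f j = f i then (1:ℕ) else 0)
          (fun j _ => by omega) (Finset.mem_univ i)

lemma monoOf_le_one {f : Fin m → ℕ × ℕ} (hf : Function.Injective f) (q : ℕ × ℕ) :
    MonoOf f q ≤ 1 := by
  classical
  rw [monoOf_apply]
  by_cases h : ∃ i, f i = q
  · obtain ⟨i, rfl⟩ := h
    rw [Finset.sum_eq_single i (fun j _ hj => if_neg (fun he => hj (hf he))) (by simp)]
    simp
  · push_neg at h
    rw [Finset.sum_eq_zero (fun j _ => if_neg (h j))]
    omega

lemma monoOf_exists {f : Fin m → ℕ × ℕ} {q : ℕ × ℕ} (h : MonoOf f q ≠ 0) :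
    ∃ i, f i = q := by
  classical
  rw [monoOf_apply] at h
  obtain ⟨i, _, hi⟩ := Finset.exists_ne_zero_of_sum_ne_zero h
  refine ⟨i, ?_⟩
  by_contra hc
  rw [if_neg hc] at hi
  exact hi rfl

lemma degSum_monoOf (f : Fin m → ℕ × ℕ) : degSum (MonoOf f) = m := by
  classical
  have key : ∀ s : Finset (Fin m),
      degSum (∑ i ∈ s, Finsupp.single (f i) 1) = s.card := by
    intro s
    induction s using Finset.induction_on with
    | empty => simp [degSum]
    | @insert i s hi ih =>
      rw [Finset.sum_insert hi, Finset.card_insert_of_notMem hi]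
      unfold degSum at ih ⊢
      rw [Finsupp.sum_add_index' (fun _ => rfl) (fun _ _ _ => rfl), ih,
        Finsupp.sum_single_index rfl]
      omega
  have := key Finset.univ
  rw [Finset.card_univ, Fintype.card_fin] at this
  exact this

lemma prod_X_eq (f : Fin m → ℕ × ℕ) :
    (∏ i : Fin m, (X (f i) : MvPolynomial (ℕ × ℕ) K)) = monomial (MonoOf f) 1 := by
  classical
  have key : ∀ s : Finset (Fin m),
      (∏ i ∈ s, (X (f i) : MvPolynomial (ℕ × ℕ) K))
        = monomial (∑ i ∈ s, Finsupp.single (f i) 1) 1 := by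
    intro s
    induction s using Finset.induction_on with
    | empty => simp
    | @insert i s hi ih =>
      rw [Finset.prod_insert hi, Finset.sum_insert hi, ih,
        show (X (f i) : MvPolynomial (ℕ × ℕ) K) = monomial (Finsupp.single (f i) 1) 1 from
          by rw [← X_pow_eq_monomial, pow_one],
        monomial_mul, one_mul]
  exact key Finset.univ

end Det

section Det2

open MvPolynomial

variable {K : Type} [Field K] {m : ℕ} (g h : Fin m → ℕ)

/-- position function of a permutation -/
def posnGH (σ : Equiv.Perm (Fin m)) : Fin m → ℕ × ℕ := fun i => (g (σ i), h i)

lemma posn_inj (hh : Function.Injective h) (σ : Equiv.Perm (Fin m)) :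
    Function.Injective (posnGH g h σ) := by
  intro x y hxy
  exact hh (congrArg Prod.snd hxy)

lemma monoOf_posn_inj (hg : Function.Injective g) (hh : Function.Injective h)
    {σ τ : Equiv.Perm (Fin m)}
    (he : MonoOf (posnGH g h σ) = MonoOf (posnGH g h τ)) : σ = τ := by
  ext i
  have h1 : 1 ≤ MonoOf (posnGH g h τ) (posnGH g h σ i) := by
    rw [← he]; exact monoOf_self _ i
  obtain ⟨c, hc⟩ := monoOf_exists (f := posnGH g h τ) (q := posnGH g h σ i) (by omega)
  have hsnd : h c = h i := congrArg Prod.snd hc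
  have hci : c = i := hh hsnd
  subst hci
  have hfst : g (τ c) = g (σ c) := congrArg Prod.fst hc
  exact congrArg Fin.val (hg hfst).symm

lemma det_X_eq :
    (Matrix.of fun i j : Fin m => (X (g i, h j) : MvPolynomial (ℕ × ℕ) K)).det
      = ∑ σ : Equiv.Perm (Fin m),
          ((Equiv.Perm.sign σ : ℤ)) • monomial (MonoOf (posnGH g h σ)) (1 : K) := by
  rw [Matrix.det_apply]
  refine Finset.sum_congr rfl fun σ _ => ?_
  rw [Units.smul_def]
  congr 1
  rw [← prod_X_eq]
  rfl

lemma coeff_det_X (μ : (ℕ × ℕ) →₀ ℕ) :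
    MvPolynomial.coeff μ
        (Matrix.of fun i j : Fin m => (X (g i, h j) : MvPolynomial (ℕ × ℕ) K)).det
      = ∑ σ : Equiv.Perm (Fin m),
          ((Equiv.Perm.sign σ : ℤ)) • (if MonoOf (posnGH g h σ) = μ then (1:K) else 0) := by
  classical
  rw [det_X_eq, MvPolynomial.coeff_sum]
  refine Finset.sum_congr rfl fun σ _ => ?_
  rw [MvPolynomial.coeff_smul, MvPolynomial.coeff_monomial]

lemma mem_support_det_X (hg : Function.Injective g) (hh : Function.Injective h)
    (τ : Equiv.Perm (Fin m)) :
    MonoOf (posnGH g h τ) ∈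
      (Matrix.of fun i j : Fin m => (X (g i, h j) : MvPolynomial (ℕ × ℕ) K)).det.support := by
  classical
  rw [MvPolynomial.mem_support_iff, coeff_det_X]
  rw [Finset.sum_eq_single τ
    (fun σ _ hσ => by
      rw [if_neg (fun he => hσ (monoOf_posn_inj g h hg hh he)), smul_zero])
    (fun hτ => absurd (Finset.mem_univ τ) hτ)]
  rw [if_pos rfl]
  rcases Int.units_eq_one_or (Equiv.Perm.sign τ) with hs | hs <;> rw [hs]
  · simp
  · simp

lemma support_det_X_sub {μ : (ℕ × ℕ) →₀ ℕ}
    (hμ : μ ∈ (Matrix.of fun i j : Fin m =>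
      (X (g i, h j) : MvPolynomial (ℕ × ℕ) K)).det.support) :
    ∃ σ : Equiv.Perm (Fin m), μ = MonoOf (posnGH g h σ) := by
  classical
  rw [MvPolynomial.mem_support_iff, coeff_det_X] at hμ
  obtain ⟨σ, _, hσ⟩ := Finset.exists_ne_zero_of_sum_ne_zero hμ
  refine ⟨σ, ?_⟩
  by_contra hc
  rw [if_neg (fun he => hc he.symm), smul_zero] at hσ
  exact hσ rfl

end Det2


section Enum

lemma inc_of_strict {f : ℕ → ℕ} {m : ℕ} (hs : ∀ i j, i < j → j < m → f i < f j) :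
    ∀ i j, i ≤ j → j < m → f i + (j - i) ≤ f j := by
  intro i j hij hj
  obtain ⟨c, rfl⟩ : ∃ c, j = i + c := ⟨j - i, by omega⟩
  clear hij
  induction c with
  | zero => simp
  | succ c ih =>
    have h1 := ih (by omega)
    have h2 := hs (i + c) (i + c + 1) (by omega) (by omega)
    rw [show i + (c + 1) = i + c + 1 by omega]
    rw [show i + c + 1 - i = (i + c - i) + 1 by omega]
    omega

lemma enumExt_in {n : ℕ} {A : Finset ℕ} (hAn : A ⊆ Finset.Icc 1 n) {i : ℕ}
    (hi : i < A.card) : 1 ≤ enumExt n A i ∧ enumExt n A i ≤ n := by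
  unfold enumExt
  rw [dif_pos hi]
  have hmem : (A.orderEmbOfFin rfl) ⟨i, hi⟩ ∈ A := A.orderEmbOfFin_mem rfl ⟨i, hi⟩
  have := hAn hmem
  rw [Finset.mem_Icc] at this
  exact this

lemma enumExt_strict {n : ℕ} {A : Finset ℕ} {i j : ℕ} (hij : i < j) (hj : j < A.card) :
    enumExt n A i < enumExt n A j := by
  unfold enumExt
  rw [dif_pos hj, dif_pos (by omega : i < A.card)]
  exact (A.orderEmbOfFin rfl).strictMono (show (⟨i, by omega⟩ : Fin A.card) < ⟨j, hj⟩ from hij)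

lemma enumExt_big {n : ℕ} {A : Finset ℕ} {i : ℕ} (hi : A.card ≤ i) :
    enumExt n A i = n + 1 + i := by
  unfold enumExt
  rw [dif_neg (by omega)]

lemma mod_add_cancel {m j x y : ℕ} (hx : x < m) (hy : y < m)
    (h : (j + x) % m = (j + y) % m) : x = y := by
  have h2 : x ≡ y [MOD m] := Nat.ModEq.add_left_cancel' j h
  unfold Nat.ModEq at h2
  rw [Nat.mod_eq_of_lt hx, Nat.mod_eq_of_lt hy] at h2
  exact h2

end Enum

open MvPolynomial in
/-- There is an element `(i,j) ∈ N(A,B)` such that `x_{ij}` divides the leading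
monomial of `det M(A,B)` with respect to the graded reverse-lexicographic order `≼`
induced by `φ`. -/
theorem stmt_9 (K : Type) [Field K] (n k : ℕ) (hk : 1 ≤ k) (hkn : k < n)
    (A B : Finset ℕ) (hAn : A ⊆ Finset.Icc 1 n) (hBn : B ⊆ Finset.Icc 1 n)
    (hA : A.card = k + 1) (hB : B.card = k + 1) :
    ∃ p ∈ NAB n A B,
      ∀ μ ∈ (MAB K n A B (k + 1)).det.support,
        (∀ ν ∈ (MAB K n A B (k + 1)).det.support, ν ≠ μ → GrevlexLT n ν μ) →
        1 ≤ μ p := by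
  classical
  set m : ℕ := k + 1 with hmdef
  have hm2 : 2 ≤ m := by omega
  have hmn : m ≤ n := by omega
  set aa : ℕ → ℕ := enumExt n A with haa
  set bb : ℕ → ℕ := enumExt n B with hbb
  have ha1 : ∀ i, i < m → 1 ≤ aa i := fun i hi => (enumExt_in hAn (by omega)).1
  have han : ∀ i, i < m → aa i ≤ n := fun i hi => (enumExt_in hAn (by omega)).2
  have hb1 : ∀ i, i < m → 1 ≤ bb i := fun i hi => (enumExt_in hBn (by omega)).1
  have hbn : ∀ i, i < m → bb i ≤ n := fun i hi => (enumExt_in hBn (by omega)).2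
  have hastr : ∀ i j, i < j → j < m → aa i < aa j := fun i j hij hj =>
    enumExt_strict hij (by omega)
  have hbstr : ∀ i j, i < j → j < m → bb i < bb j := fun i j hij hj =>
    enumExt_strict hij (by omega)
  have hainc := inc_of_strict hastr
  have hbinc := inc_of_strict hbstr
  have avinj : ∀ x y, x < m → y < m → aa x = aa y → x = y := by
    intro x y hx hy hxy
    rcases lt_trichotomy x y with h | h | h
    · exact absurd hxy (by have := hastr x y h hy; omega)
    · exact h
    · exact absurd hxy (by have := hastr y x h hx; omega)
  have bvinj : ∀ x y, x < m → y < m → bb x = bb y → x = y := by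
    intro x y hx hy hxy
    rcases lt_trichotomy x y with h | h | h
    · exact absurd hxy (by have := hbstr x y h hy; omega)
    · exact h
    · exact absurd hxy (by have := hbstr y x h hx; omega)
  -- ell facts
  have hSm : ShiftOK n A B m := by
    intro i hi
    have h1 : enumExt n B i ≤ n := (enumExt_in hBn (by omega)).2
    have h2 : enumExt n A (i + m) = n + 1 + (i + m) := enumExt_big (by omega)
    omega
  have hex : ∃ ℓ, ShiftOK n A B ℓ := ⟨m, hSm⟩
  have hLdef : ell n A B = Nat.find hex := by unfold ell; rw [dif_pos hex]
  set L : ℕ := ell n A B with hLset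
  have hSok : ShiftOK n A B L := by rw [hLdef]; exact Nat.find_spec hex
  have hLle : L ≤ m := by rw [hLdef]; exact Nat.find_le hSm
  have hLa : ∀ i, i + L < m → bb i < aa (i + L) := fun i hiL => hSok i (by omega)
  have hW : 1 ≤ L → ∃ w, w + L ≤ m ∧ aa (w + L - 1) ≤ bb w := by
    intro hL1
    have hnot : ¬ ShiftOK n A B (L - 1) :=
      Nat.find_min hex (m := L - 1) (by rw [← hLdef]; omega)
    unfold ShiftOK at hnot
    push_neg at hnot
    obtain ⟨i, hi, hle⟩ := hnot
    have hble : enumExt n B i ≤ n := (enumExt_in hBn (by omega)).2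
    have hrange : i + (L - 1) < A.card := by
      by_contra hc
      push_neg at hc
      rw [enumExt_big hc] at hle
      omega
    refine ⟨i, by omega, ?_⟩
    rw [show i + L - 1 = i + (L - 1) by omega]
    exact hle
  -- the matrix in generic form
  set g : Fin m → ℕ := fun i => aa (i : ℕ) with hgdef
  set hcol : Fin m → ℕ := fun i => bb (i : ℕ) with hhdef
  have hginj : Function.Injective g := fun x y hxy =>
    Fin.ext (avinj _ _ x.isLt y.isLt hxy)
  have hhinj : Function.Injective hcol := fun x y hxy =>
    Fin.ext (bvinj _ _ x.isLt y.isLt hxy)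
  have hMAB : MAB K n A B m
      = Matrix.of (fun i j : Fin m => (X (g i, hcol j) : MvPolynomial (ℕ × ℕ) K)) := rfl
  have hposnσ : ∀ (σ : Equiv.Perm (Fin m)) (z : Fin m),
      posnGH g hcol σ z = (aa ((σ z : ℕ)), bb ((z : ℕ))) := fun _ _ => rfl
  -- the chosen element of NAB
  refine ⟨(enumExt n A ((0 + ell n A B) % A.card), enumExt n B 0), ?_, ?_⟩
  · unfold NAB
    exact Finset.mem_image_of_mem _ (Finset.mem_range.mpr (by omega))
  intro μ hμ hprem
  rw [hMAB] at hμ hprem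
  obtain ⟨σ, rfl⟩ := support_det_X_sub g hcol hμ
  -- stability
  have hstab : ∀ i j : Fin m, i ≠ j →
      (phiOrd n (aa (σ i : ℕ), bb (j : ℕ)) ≤ phiOrd n (aa (σ i : ℕ), bb (i : ℕ)) ∧
        phiOrd n (aa (σ i : ℕ), bb (j : ℕ)) ≤ phiOrd n (aa (σ j : ℕ), bb (j : ℕ))) ∨
      (phiOrd n (aa (σ j : ℕ), bb (i : ℕ)) ≤ phiOrd n (aa (σ i : ℕ), bb (i : ℕ)) ∧
        phiOrd n (aa (σ j : ℕ), bb (i : ℕ)) ≤ phiOrd n (aa (σ j : ℕ), bb (j : ℕ))) := by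
    intro i j hne
    set τ : Equiv.Perm (Fin m) := σ * Equiv.swap i j with hτdef
    have hτi : τ i = σ j := by
      rw [hτdef, Equiv.Perm.mul_apply, Equiv.swap_apply_left]
    have hτj : τ j = σ i := by
      rw [hτdef, Equiv.Perm.mul_apply, Equiv.swap_apply_right]
    have hτo : ∀ c, c ≠ i → c ≠ j → τ c = σ c := by
      intro c hci hcj
      rw [hτdef, Equiv.Perm.mul_apply, Equiv.swap_apply_of_ne_of_ne hci hcj]
    have hτne : τ ≠ σ := by
      intro hcon
      have : σ j = σ i := by rw [← hτi, hcon]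
      exact hne (σ.injective this).symm
    have hν : MonoOf (posnGH g hcol τ) ∈ _ := mem_support_det_X (K := K) g hcol hginj hhinj τ
    have hνne : MonoOf (posnGH g hcol τ) ≠ MonoOf (posnGH g hcol σ) := by
      intro he
      exact hτne (monoOf_posn_inj g hcol hginj hhinj he)
    rcases hprem _ hν hνne with hdeg | ⟨_, p, hp1, hp2⟩
    · rw [degSum_monoOf, degSum_monoOf] at hdeg
      exact absurd hdeg (lt_irrefl _)
    have hν1 : MonoOf (posnGH g hcol τ) p ≤ 1 := monoOf_le_one (posn_inj g hcol hhinj τ) p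
    have hμ0 : MonoOf (posnGH g hcol σ) p = 0 := by omega
    obtain ⟨c, hc⟩ := monoOf_exists (f := posnGH g hcol τ) (q := p) (by omega)
    have hcij : c = i ∨ c = j := by
      by_contra hcc
      push_neg at hcc
      have he : posnGH g hcol τ c = posnGH g hcol σ c := by
        unfold posnGH
        rw [hτo c hcc.1 hcc.2]
      have h1 : 1 ≤ MonoOf (posnGH g hcol σ) p := by
        rw [← hc, he]
        exact monoOf_self _ c
      omega
    -- p is φ-below both σ-corners
    have hkey : ∀ z : Fin m, z = i ∨ z = j →
        phiOrd n p ≤ phiOrd n (aa (σ z : ℕ), bb (z : ℕ)) := by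
      intro z hzij
      by_contra hcon
      push_neg at hcon
      rw [← hposnσ σ z] at hcon
      have heq := hp2 _ hcon
      have h1 : 1 ≤ MonoOf (posnGH g hcol σ) (posnGH g hcol σ z) := monoOf_self _ z
      obtain ⟨c', hc'⟩ := monoOf_exists (f := posnGH g hcol τ)
        (q := posnGH g hcol σ z) (by omega)
      have hsnd : hcol c' = hcol z := congrArg Prod.snd hc'
      have hcz : c' = z := hhinj hsnd
      subst hcz
      have hfst : g (τ c') = g (σ c') := congrArg Prod.fst hc'
      have hτσ : τ c' = σ c' := hginj hfst
      rcases hzij with rfl | rfl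
      · rw [hτi] at hτσ
        exact hne (σ.injective hτσ).symm
      · rw [hτj] at hτσ
        exact hne (σ.injective hτσ)
    rcases hcij with rfl | rfl
    · -- p = (aa (σ j), bb c)
      have hpv : p = (aa (σ j : ℕ), bb (c : ℕ)) := by
        rw [← hc, hposnσ τ c, hτi]
      right
      rw [← hpv]
      exact ⟨hkey c (Or.inl rfl), hkey j (Or.inr rfl)⟩
    · -- p = (aa (σ i), bb c)
      have hpv : p = (aa (σ i : ℕ), bb (c : ℕ)) := by
        rw [← hc, hposnσ τ c, hτj]
      left
      rw [← hpv]
      exact ⟨hkey i (Or.inl rfl), hkey c (Or.inr rfl)⟩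
  obtain ⟨u, hu, hσval⟩ := LemB (by omega) ha1 han hb1 hbn hainc hbinc σ hstab
  set i0 : Fin m := ⟨0, by omega⟩ with hi0def
  by_cases hcase : u = L % m
  · -- μ is the N(A,B) monomial; it contains the chosen element
    have hσ0 : (σ i0 : ℕ) = L % m := by
      have h0 := hσval i0
      rw [show ((i0 : ℕ)) = 0 from rfl, Nat.zero_add, Nat.mod_eq_of_lt hu] at h0
      rw [h0, hcase]
    have hp0 : (enumExt n A ((0 + ell n A B) % A.card), enumExt n B 0)
        = posnGH g hcol σ i0 := by
      rw [hposnσ σ i0, hσ0]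
      rw [show ((i0 : ℕ)) = 0 from rfl]
      rw [show (0 + ell n A B) = L from (Nat.zero_add L)]
      rw [hA]
    rw [hp0]
    exact monoOf_self _ _
  · -- contradiction: μ would beat the N(A,B) monomial
    exfalso
    set cfin : Fin m := ⟨L % m, Nat.mod_lt _ (by omega)⟩ with hcfdef
    set ρ : Equiv.Perm (Fin m) := Equiv.addRight cfin with hρdef
    have hρval : ∀ i : Fin m, ((ρ i : ℕ)) = ((i : ℕ) + L) % m := by
      intro i
      have h1 : ((ρ i : ℕ)) = ((i : ℕ) + (L % m)) % m := by
        rw [hρdef]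
        show ((i + cfin : Fin m) : ℕ) = _
        rw [Fin.add_def]
      rw [h1]
      conv_rhs => rw [Nat.add_mod, Nat.mod_eq_of_lt i.isLt]
    have hν : MonoOf (posnGH g hcol ρ) ∈ _ := mem_support_det_X (K := K) g hcol hginj hhinj ρ
    have hνneμ : MonoOf (posnGH g hcol ρ) ≠ MonoOf (posnGH g hcol σ) := by
      intro he
      have hρσ : ρ = σ := monoOf_posn_inj g hcol hginj hhinj he
      have h0 := hσval i0
      rw [← hρσ, hρval i0] at h0
      rw [show ((i0 : ℕ)) = 0 from rfl, Nat.zero_add, Nat.zero_add,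
        Nat.mod_eq_of_lt hu] at h0
      exact hcase h0.symm
    rcases hprem _ hν hνneμ with hdeg | ⟨_, p, hp1, hp2⟩
    · rw [degSum_monoOf, degSum_monoOf] at hdeg
      exact absurd hdeg (lt_irrefl _)
    obtain ⟨i₀, hi₀⟩ := monoOf_exists (f := posnGH g hcol ρ) (q := p) (by omega)
    obtain ⟨j, hjm, hφ⟩ := LemC hm2 hmn ha1 han hb1 hbn hainc hbinc hLle hLa hW
      u hu hcase (i₀ : ℕ) i₀.isLt
    have hpval : p = (aa (((i₀ : ℕ) + L) % m), bb ((i₀ : ℕ))) := by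
      rw [← hi₀, hposnσ ρ i₀, hρval i₀]
    have hφ' : phiOrd n (aa ((j + u) % m), bb j) < phiOrd n p := by
      rw [hpval]
      exact hφ
    have heq := hp2 _ hφ'
    set jf : Fin m := ⟨j, hjm⟩ with hjfdef
    have hqσ : (aa ((j + u) % m), bb j) = posnGH g hcol σ jf := by
      rw [hposnσ σ jf, hσval jf]
    have hμq : 1 ≤ MonoOf (posnGH g hcol σ) (aa ((j + u) % m), bb j) := by
      rw [hqσ]
      exact monoOf_self _ _
    obtain ⟨c, hc⟩ := monoOf_exists (f := posnGH g hcol ρ)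
      (q := (aa ((j + u) % m), bb j)) (by omega)
    have hsnd : hcol c = bb j := congrArg Prod.snd hc
    have hcj : (c : ℕ) = j := bvinj _ _ c.isLt hjm hsnd
    have hfst : g (ρ c) = aa ((j + u) % m) := congrArg Prod.fst hc
    have hrc : ((ρ c : ℕ)) = (j + u) % m :=
      avinj _ _ (ρ c).isLt (Nat.mod_lt _ (by omega)) hfst
    rw [hρval c, hcj] at hrc
    have hjL : (j + (L % m)) % m = (j + u) % m := by
      rw [← hrc]
      conv_rhs => rw [Nat.add_mod, Nat.mod_eq_of_lt hjm]
    exact hcase (mod_add_cancel (Nat.mod_lt _ (by omega)) hu hjL).symm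
end

section
/- The minimal non-faces of the boundary complex of the cyclic polytope C_{2n−4}(2n) are exactly the (n−1)-subsets η of [2n] for which the induced subgraph C_{2n}(η) of the 2n-cycle has exactly n−1 connected components (i.e., η contains no two cyclically adjacent elements). -/
/-- The cycle graph on `ZMod N` with edges `{v, v+1}`. -/
def cycGraph (N : ℕ) : SimpleGraph (ZMod N) where
  Adj v w := v ≠ w ∧ (w = v + 1 ∨ v = w + 1)
  symm := ⟨fun v w h => ⟨h.1.symm, h.2.symm⟩⟩
  loopless := ⟨fun v h => h.1 rfl⟩

/-- `ω(σ)`: the number of odd-sized connected components of the subgraph of the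
cycle graph induced by `σ`. -/
noncomputable def omegaOdd (N : ℕ) (σ : Finset (ZMod N)) : ℕ :=
  Nat.card {C : ((cycGraph N).induce (σ : Set (ZMod N))).ConnectedComponent //
    Odd (Nat.card C.supp)}

/-- The `i`-th point on the moment curve in `ℝ^d`, `x_i = (i, i², …, i^d)`; the vertex
`v : ZMod N` is labelled `i = v.val + 1 ∈ {1,…,N}`. -/
noncomputable def moment (N d : ℕ) (v : ZMod N) : Fin d → ℝ :=
  fun t => ((v.val : ℝ) + 1) ^ ((t : ℕ) + 1)

/-!
Every induced subgraph of the even cycle `C_{2n}` is bipartite, so choosing in each of its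
connected components the larger colour class yields an independent `τ ⊆ σ` with
`|σ| + ω(σ) ≤ 2|τ|`; on the other hand an independent set has only singleton components, so
`|τ| + ω(τ) = 2|τ|`. Hence a minimal non-face is independent (otherwise `τ` would be a smaller
non-face) and has exactly `n - 1` elements (deleting a point of a larger independent set leaves a
non-face). Finally, a finite graph has as many components as vertices iff it has no edges.
-/

open Finset

theorem Finset.exists_half_le_card_filter_eq {α : Type*} (s : Finset α) (f : α → Fin 2) :
    ∃ i, (#s + 1) / 2 ≤ #{a ∈ s | f a = i} := by
  have hsplit : #s = #{a ∈ s | f a = 0} + #{a ∈ s | f a = 1} := by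
    rw [card_eq_sum_card_fiberwise (f := f) (t := univ) fun _ _ => mem_univ _, Fin.sum_univ_two]
  by_cases h : #{a ∈ s | f a = 1} ≤ #{a ∈ s | f a = 0}
  · exact ⟨0, by omega⟩
  · exact ⟨1, by omega⟩

namespace SimpleGraph
variable {V : Type*} {G : SimpleGraph V}

theorem induce_eq_bot {s : Set V} : G.induce s = ⊥ ↔ G.IsIndepSet s := by
  rw [eq_bot_iff_forall_not_adj]
  exact ⟨fun h u hu v hv _ => h ⟨u, hu⟩ ⟨v, hv⟩,
    fun h u v huv => h u.2 v.2 (G.ne_of_adj huv) huv⟩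

theorem connectedComponentMk_injective_iff :
    Function.Injective G.connectedComponentMk ↔ G = ⊥ := by
  refine ⟨fun h => eq_bot_iff_forall_not_adj.mpr fun u v huv =>
    huv.ne (h (ConnectedComponent.connectedComponentMk_eq_of_adj huv)), ?_⟩
  rintro rfl u v huv
  exact reachable_bot.mp (ConnectedComponent.exact huv)

theorem connectedComponentMk_surjective : Function.Surjective G.connectedComponentMk :=
  fun C => C.ind fun v => ⟨v, rfl⟩

theorem card_connectedComponent_eq_iff [Finite V] :
    Nat.card G.ConnectedComponent = Nat.card V ↔ G = ⊥ := by
  rw [← connectedComponentMk_injective_iff]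
  exact ⟨fun h => (connectedComponentMk_surjective.bijective_of_nat_card_le h.ge).1,
    fun h => (Nat.card_eq_of_bijective _ ⟨h, connectedComponentMk_surjective⟩).symm⟩

theorem oddComponents_bot : (⊥ : SimpleGraph V).oddComponents = Set.univ := by
  refine Set.eq_univ_of_forall fun C => C.ind fun v => ?_
  have : ((⊥ : SimpleGraph V).connectedComponentMk v).supp = {v} := by
    ext w
    rw [ConnectedComponent.mem_supp_iff, ConnectedComponent.eq, reachable_bot]
    rfl
  simp [this]

theorem ncard_oddComponents_bot [Finite V] :
    (⊥ : SimpleGraph V).oddComponents.ncard = Nat.card V := by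
  rw [oddComponents_bot, Set.ncard_univ, card_connectedComponent_eq_iff.mpr rfl]

theorem IsBipartite.exists_isIndepSet_two_mul_card_ge [Fintype V] (h : G.IsBipartite) :
    ∃ I : Finset V, G.IsIndepSet I ∧ Fintype.card V + G.oddComponents.ncard ≤ 2 * #I := by
  classical
  obtain ⟨c⟩ := h
  set comp := G.connectedComponentMk
  choose m hm using fun C => exists_half_le_card_filter_eq {v | comp v = C} c
  refine ⟨({v | c v = m (comp v)} : Finset V), fun u hu v hv _ huv => c.valid huv ?_, ?_⟩
  · simp only [coe_filter, mem_univ, true_and, Set.mem_ofPred_eq] at hu hv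
    rw [hu, hv]
    exact congrArg m (ConnectedComponent.connectedComponentMk_eq_of_adj huv)
  have hV : Fintype.card V = ∑ C, #{v | comp v = C} :=
    card_eq_sum_card_fiberwise fun _ _ => mem_univ _
  have hI : #{v | c v = m (comp v)} = ∑ C, #{v ∈ {v | comp v = C} | c v = m C} := by
    rw [card_eq_sum_card_fiberwise (f := comp) (t := univ) fun _ _ => mem_univ _]
    refine sum_congr rfl fun C _ => congrArg card ?_
    ext v
    simp only [mem_filter, mem_univ, true_and]
    constructor
    · rintro ⟨h1, rfl⟩; exact ⟨rfl, h1⟩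
    · rintro ⟨rfl, h1⟩; exact ⟨h1, rfl⟩
  have hodd : G.oddComponents.ncard = #{C | Odd #{v | comp v = C}} := by
    rw [← Set.ncard_coe_finset]
    congr 1
    ext C
    have hsupp : C.supp = ({v | comp v = C} : Finset V) := by
      ext v
      simp [ConnectedComponent.mem_supp_iff, comp]
    rw [coe_filter, Set.mem_ofPred_eq, Set.mem_ofPred_eq, hsupp, Set.ncard_coe_finset]
    simp only [mem_univ, true_and]
  have hceil (k : ℕ) : k + (if Odd k then 1 else 0) = 2 * ((k + 1) / 2) := by
    rcases Nat.even_or_odd' k with ⟨j, rfl | rfl⟩ <;> simp [Nat.odd_iff] <;> omega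
  rw [hV, hI, hodd, card_filter, ← sum_add_distrib, mul_sum]
  exact sum_le_sum fun C _ => (hceil _).trans_le (Nat.mul_le_mul_left 2 (hm C))

theorem IsBipartite.exists_isIndepSet_subset_two_mul_card_ge (h : G.IsBipartite) (s : Finset V) :
    ∃ t ⊆ s, G.IsIndepSet t ∧ #s + (G.induce s).oddComponents.ncard ≤ 2 * #t := by
  classical
  obtain ⟨I, hI, hcard⟩ :=
    IsBipartite.exists_isIndepSet_two_mul_card_ge (h.of_hom (Embedding.induce (s : Set V)).toHom)
  refine ⟨I.map (Function.Embedding.subtype _), fun v hv => ?_,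
    fun u hu v hv huv hadj => ?_, ?_⟩
  · obtain ⟨x, -, rfl⟩ := mem_map.mp hv
    exact x.2
  · obtain ⟨x, hx, rfl⟩ := mem_map.mp hu
    obtain ⟨y, hy, rfl⟩ := mem_map.mp hv
    exact hI hx hy (fun h => huv (congrArg Subtype.val h)) hadj
  · simpa using hcard

theorem card_connectedComponent_induce_eq_iff {s : Finset V} :
    Nat.card (G.induce s).ConnectedComponent = #s ↔ G.IsIndepSet s := by
  rw [← induce_eq_bot, ← card_connectedComponent_eq_iff]
  simp

theorem IsIndepSet.ncard_oddComponents_induce {s : Finset V} (h : G.IsIndepSet s) :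
    (G.induce s).oddComponents.ncard = #s := by
  rw [induce_eq_bot.mpr h, ncard_oddComponents_bot]
  simp

end SimpleGraph

open SimpleGraph

theorem cycGraph_two_mul_isBipartite (n : ℕ) : (cycGraph (2 * n)).IsBipartite := by
  let f := ZMod.castHom (dvd_mul_right 2 n) (ZMod 2)
  have hf (v : ZMod (2 * n)) : f (v + 1) ≠ f v := by simp
  let c : (cycGraph (2 * n)).Coloring (ZMod 2) := Coloring.mk (fun v => f v) fun {v w} h => by
    rcases h.2 with rfl | rfl
    exacts [(hf v).symm, hf w]
  simpa using c.colorable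

theorem omegaOdd_eq_ncard_oddComponents (N : ℕ) (σ : Finset (ZMod N)) :
    omegaOdd N σ = ((cycGraph N).induce σ).oddComponents.ncard :=
  rfl

/-- The minimal non-faces of the boundary complex of the cyclic polytope `C_{2n−4}(2n)`
(faces characterized by Gale's evenness condition `|σ| + ω(σ) ≤ 2n−4`) are exactly the
`(n−1)`-subsets `η ⊆ [2n]` whose induced subgraph of the `2n`-cycle has exactly `n−1`
connected components (i.e. `η` contains no two cyclically adjacent elements). -/
theorem stmt_11 (n : ℕ) (hn : 3 ≤ n) (η : Finset (ZMod (2 * n))) :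
    (¬ (η.card + omegaOdd (2 * n) η ≤ 2 * n - 4) ∧
      ∀ τ ⊂ η, τ.card + omegaOdd (2 * n) τ ≤ 2 * n - 4) ↔
    (η.card = n - 1 ∧
      Nat.card ((cycGraph (2 * n)).induce (η : Set (ZMod (2 * n)))).ConnectedComponent
        = n - 1) := by
  have hsum_indep {σ : Finset (ZMod (2 * n))} (h : (cycGraph (2 * n)).IsIndepSet σ) :
      σ.card + omegaOdd (2 * n) σ = 2 * σ.card := by
    rw [omegaOdd_eq_ncard_oddComponents, h.ncard_oddComponents_induce]
    omega
  constructor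
  · rintro ⟨hη, hmin⟩
    obtain ⟨τ, hτη, hτ, hle⟩ :=
      (cycGraph_two_mul_isBipartite n).exists_isIndepSet_subset_two_mul_card_ge η
    rw [← omegaOdd_eq_ncard_oddComponents] at hle
    have hηindep : (cycGraph (2 * n)).IsIndepSet η := by
      obtain rfl | hssub := hτη.eq_or_ssubset
      · exact hτ
      · have := hmin τ hssub
        rw [hsum_indep hτ] at this
        omega
    rw [hsum_indep hηindep] at hη
    have hcard : η.card = n - 1 := by
      refine le_antisymm (not_lt.mp fun hgt => ?_) (by omega)
      obtain ⟨x, hx⟩ := card_pos.mp (by omega : 0 < η.card)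
      have := hmin _ (erase_ssubset hx)
      rw [hsum_indep (hηindep.mono (coe_subset.mpr (erase_subset x η))),
        card_erase_of_mem hx] at this
      omega
    exact ⟨hcard, (card_connectedComponent_induce_eq_iff.mpr hηindep).trans hcard⟩
  · rintro ⟨hcard, hcomp⟩
    have hηindep := card_connectedComponent_induce_eq_iff.mp (hcomp.trans hcard.symm)
    refine ⟨by rw [hsum_indep hηindep, hcard]; omega, fun τ hτ => ?_⟩
    rw [hsum_indep (hηindep.mono (coe_subset.mpr hτ.subset))]
    have := card_lt_card hτ
    omega
end

section
/- Let G be a finite group acting simplicially on a simplicial complex Δ such that for every g ∈ G and every face σ ∈ Δ, gv = v for all vertices v ∈ σ ∩ g(σ). Then the barycentric subdivision sd(Δ) is a regular G-complex. -/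
/-- (Bredon.) Let `G` be a group acting simplicially on a simplicial complex `Δ` such
that for every `g ∈ G` and face `σ ∈ Δ`, `g·v = v` for all vertices `v ∈ σ ∩ gσ`.
Then the barycentric subdivision `sd Δ` is a regular `G`-complex: for every subgroup
`U ≤ G`, vertices `v₀,…,v_m` of `sd Δ` (nonempty faces of `Δ`) and `g₀,…,g_m ∈ U` such
that both `{v₀,…,v_m}` and `{g₀v₀,…,g_mv_m}` are simplices of `sd Δ` (chains in `Δ`),
there is `g ∈ U` with `g·vᵢ = gᵢ·vᵢ` for all `i`. -/
theorem stmt_16 (G α : Type) [Group G] [MulAction G α] [DecidableEq α]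
    (Δ : Set (Finset α))
    (hact : ∀ (g : G), ∀ σ ∈ Δ, Finset.image (fun a => g • a) σ ∈ Δ)
    (hfix : ∀ (g : G), ∀ σ ∈ Δ, ∀ v ∈ σ,
      v ∈ Finset.image (fun a => g • a) σ → g • v = v) :
    ∀ (U : Subgroup G) (m : ℕ) (v : Fin (m + 1) → Finset α) (gs : Fin (m + 1) → G),
      (∀ i, gs i ∈ U) →
      (∀ i, v i ∈ Δ) → (∀ i, (v i).Nonempty) →
      (∀ i j, v i ⊆ v j ∨ v j ⊆ v i) →
      (∀ i j, Finset.image (fun a => gs i • a) (v i) ⊆ Finset.image (fun a => gs j • a) (v j) ∨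
              Finset.image (fun a => gs j • a) (v j) ⊆ Finset.image (fun a => gs i • a) (v i)) →
      ∃ g ∈ U, ∀ i, Finset.image (fun a => g • a) (v i) =
        Finset.image (fun a => gs i • a) (v i) := by

  intro U m v gs hgs hmem hne hchain hchain'
  obtain ⟨i₀, -, hmax⟩ := Finset.exists_max_image Finset.univ (fun i => (v i).card)
    ⟨0, Finset.mem_univ 0⟩
  refine ⟨gs i₀, hgs i₀, fun i => ?_⟩
  have hsub : v i ⊆ v i₀ := by
    rcases hchain i i₀ with h | h
    · exact h
    · rw [Finset.eq_of_subset_of_card_le h (hmax i (Finset.mem_univ i))]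
  have hsub' : Finset.image (fun a => gs i • a) (v i) ⊆
      Finset.image (fun a => gs i₀ • a) (v i₀) := by
    rcases hchain' i i₀ with h | h
    · exact h
    · rw [Finset.eq_of_subset_of_card_le h ?_]
      rw [Finset.card_image_of_injective _ (MulAction.injective (gs i)),
        Finset.card_image_of_injective _ (MulAction.injective (gs i₀))]
      exact hmax i (Finset.mem_univ i)
  refine Finset.image_congr fun x hx => ?_
  set k : G := (gs i₀)⁻¹ * gs i with hk
  have hkx : k • x ∈ v i₀ := by
    have : gs i • x ∈ Finset.image (fun a => gs i₀ • a) (v i₀) :=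
      hsub' (Finset.mem_image_of_mem _ hx)
    obtain ⟨y, hy, hyx⟩ := Finset.mem_image.mp this
    have : y = k • x := by
      rw [hk, mul_smul, ← hyx, inv_smul_smul]
    rwa [← this]
  have hfixk : k • (k • x) = k • x :=
    hfix k (v i₀) (hmem i₀) (k • x) hkx
      (Finset.mem_image_of_mem _ (hsub hx))
  have hkxx : k • x = x := MulAction.injective k hfixk
  have : gs i • x = gs i₀ • (k • x) := by
    rw [hk, mul_smul, smul_inv_smul]
  rw [this, hkxx]
end

section
/- The number of type-A generalized k-triangulations of the n-gon satisfies the determinant identity det(C_{n−i−j})_{i,j=1,…,k} = ∏_{1≤i≤j≤n−2k−1} (i+j+2k)/(i+j), where C_m is the m-th Catalan number. -/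
/-!
Write `D k m = det (C (m + 1 + i + j))_{0 ≤ i, j < k}`; reversing rows and columns turns the
matrix of the statement into this Hankel matrix with `m = n - 2k - 1`. The Desnanot–Jacobi
identity (condensation), applied to a Hankel matrix, gives
`D (k+2) m * D k (m+2) = D (k+1) m * D (k+1) (m+2) - D (k+1) (m+1) ^ 2`,
with `D 0 m = 1` and `D 1 m = C (m + 1)`. The product `F k m = ∏_{1 ≤ i ≤ j ≤ m} f_k (i + j)`,
where `f_k s = (s + 2k) / s`, has the same initial values and obeys the same recurrence:
enlarging the triangle multiplies it by a window of values of `f_k`, while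
`f_(k+2) s * f_k (s+2) = f_(k+1) s * f_(k+1) (s+2)`, so after cancellation only two telescoping
products remain. As `F` is positive, the interior minor in the condensation step is invertible,
and induction on `k` concludes.
-/

open Finset

namespace Matrix

section Hankel

variable {α : Type*}

def hankel (c : ℕ → α) (n : ℕ) : Matrix (Fin n) (Fin n) α :=
  of fun i j => c (i + j)

variable (c : ℕ → α) (n : ℕ)

theorem hankel_submatrix_castSucc :
    (hankel c (n + 1)).submatrix Fin.castSucc Fin.castSucc = hankel c n := by
  ext i j; simp [hankel]

theorem hankel_submatrix_succ :
    (hankel c (n + 1)).submatrix Fin.succ Fin.succ = hankel (fun t => c (t + 2)) n := by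
  ext i j; simp only [hankel, submatrix_apply, of_apply, Fin.val_succ]; ring_nf

theorem hankel_submatrix_castSucc_succ :
    (hankel c (n + 1)).submatrix Fin.castSucc Fin.succ = hankel (fun t => c (t + 1)) n := by
  ext i j; simp only [hankel, submatrix_apply, of_apply, Fin.val_succ, Fin.val_castSucc]; ring_nf

theorem hankel_submatrix_succ_castSucc :
    (hankel c (n + 1)).submatrix Fin.succ Fin.castSucc = hankel (fun t => c (t + 1)) n := by
  ext i j; simp only [hankel, submatrix_apply, of_apply, Fin.val_succ, Fin.val_castSucc]; ring_nf

end Hankel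

section Determinant

variable {R : Type*} [CommRing R]

theorem det_mul_det_toBlocks₁₁ {m : Type*} [Fintype m] [DecidableEq m]
    (A : Matrix (m ⊕ Fin 2) (m ⊕ Fin 2) R) (hA : IsUnit A.toBlocks₁₁.det) :
    A.det * A.toBlocks₁₁.det =
      (A.submatrix (Sum.map id fun _ : Unit => 0) (Sum.map id fun _ : Unit => 0)).det *
          (A.submatrix (Sum.map id fun _ : Unit => 1) (Sum.map id fun _ : Unit => 1)).det -
        (A.submatrix (Sum.map id fun _ : Unit => 0) (Sum.map id fun _ : Unit => 1)).det *
          (A.submatrix (Sum.map id fun _ : Unit => 1) (Sum.map id fun _ : Unit => 0)).det := by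
  let := A.toBlocks₁₁.invertibleOfIsUnitDet hA
  set S := A.toBlocks₂₂ - A.toBlocks₂₁ * ⅟A.toBlocks₁₁ * A.toBlocks₁₂
  have border (i j : Fin 2) :
      (A.submatrix (Sum.map id fun _ : Unit => i) (Sum.map id fun _ : Unit => j)).det =
        A.toBlocks₁₁.det * S i j := by
    have : A.submatrix (Sum.map id fun _ : Unit => i) (Sum.map id fun _ : Unit => j) =
        fromBlocks A.toBlocks₁₁ (A.toBlocks₁₂.submatrix id fun _ => j)
          (A.toBlocks₂₁.submatrix (fun _ => i) id) (of fun _ _ => A.toBlocks₂₂ i j) := by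
      ext (a | a) (b | b) <;> rfl
    rw [this, det_fromBlocks₁₁]
    congr 1
    simp [S, det_unique, mul_apply]
  have whole : A.det = A.toBlocks₁₁.det * S.det := by
    conv_lhs => rw [← fromBlocks_toBlocks A]
    exact det_fromBlocks₁₁ ..
  rw [whole, det_fin_two, border, border, border, border]
  ring

theorem det_submatrix_mul_det_submatrix_swap {ι κ : Type*} [Fintype ι] [DecidableEq ι]
    [Fintype κ] [DecidableEq κ] (e f : ι ≃ κ) (M N : Matrix κ κ R) :
    (M.submatrix e f).det * (N.submatrix f e).det = M.det * N.det := by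
  let σ : Equiv.Perm ι := f.trans e.symm
  have hM : M.submatrix e f = (M.submatrix e e).submatrix id σ := by
    ext i j; simp [σ]
  have hN : N.submatrix f e = (N.submatrix e e).submatrix σ id := by
    ext i j; simp [σ]
  rw [hM, hN, det_permute', det_permute, det_submatrix_equiv_self, det_submatrix_equiv_self,
    mul_mul_mul_comm, ← Int.cast_mul, ← Units.val_mul, Int.units_mul_self]
  simp

theorem desnanot_jacobi {k : ℕ} (A : Matrix (Fin (k + 2)) (Fin (k + 2)) R)
    (hA : IsUnit
      (A.submatrix (fun i : Fin k => i.succ.castSucc) fun i => i.succ.castSucc).det) :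
    A.det * (A.submatrix (fun i : Fin k => i.succ.castSucc) fun i => i.succ.castSucc).det =
      (A.submatrix Fin.castSucc Fin.castSucc).det * (A.submatrix Fin.succ Fin.succ).det -
        (A.submatrix Fin.castSucc Fin.succ).det * (A.submatrix Fin.succ Fin.castSucc).det := by
  let e : Fin k ⊕ Fin 2 ≃ Fin (k + 2) :=
    Equiv.ofBijective (Sum.elim (fun i => i.succ.castSucc) ![0, Fin.last (k + 1)]) <|
      (Fintype.bijective_iff_injective_and_card _).2 ⟨by
        refine Function.Injective.sumElim (fun i j h => by simpa using h) ?_ ?_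
        · intro i j h; fin_cases i <;> fin_cases j <;> simp_all [Fin.ext_iff]
        · intro i j
          fin_cases j
          · exact Fin.castSucc_ne_zero_iff.2 i.succ_ne_zero
          · exact Fin.castSucc_ne_last _, by simp⟩
  let e₀ : Fin k ⊕ Unit ≃ Fin (k + 1) :=
    Equiv.ofBijective (Sum.elim Fin.succ fun _ => 0) <|
      (Fintype.bijective_iff_injective_and_card _).2 ⟨by
        refine Function.Injective.sumElim (Fin.succ_injective _) (fun _ _ _ => rfl) ?_
        intro i j; simp, by simp⟩
  let e₁ : Fin k ⊕ Unit ≃ Fin (k + 1) :=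
    Equiv.ofBijective (Sum.elim Fin.castSucc fun _ => Fin.last k) <|
      (Fintype.bijective_iff_injective_and_card _).2 ⟨by
        refine Function.Injective.sumElim (Fin.castSucc_injective _) (fun _ _ _ => rfl) ?_
        intro i j; exact Fin.castSucc_ne_last i, by simp⟩
  have he₀ : e ∘ (Sum.map id fun _ : Unit => 0) = Fin.castSucc ∘ e₀ := by
    funext i; rcases i with i | i <;> rfl
  have he₁ : e ∘ (Sum.map id fun _ : Unit => 1) = Fin.succ ∘ e₁ := by
    funext i; rcases i with i | i
    · exact (Fin.succ_castSucc i).symm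
    · rfl
  have minor {r c : Fin k ⊕ Unit → Fin k ⊕ Fin 2} {f g : Fin (k + 1) → Fin (k + 2)}
      {e' e'' : Fin k ⊕ Unit ≃ Fin (k + 1)} (hr : e ∘ r = f ∘ e') (hc : e ∘ c = g ∘ e'') :
      (A.submatrix e e).submatrix r c = (A.submatrix f g).submatrix e' e'' := by
    simp only [submatrix_submatrix, hr, hc]
  have key := det_mul_det_toBlocks₁₁ (A.submatrix e e) hA
  rwa [minor he₀ he₀, minor he₁ he₁, minor he₀ he₁, minor he₁ he₀, det_submatrix_equiv_self,
    det_submatrix_equiv_self, det_submatrix_equiv_self, det_submatrix_mul_det_submatrix_swap]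
    at key

theorem det_hankel_mul_det_hankel (c : ℕ → R) (n : ℕ)
    (hc : IsUnit (hankel (fun t => c (t + 2)) n).det) :
    (hankel c (n + 2)).det * (hankel (fun t => c (t + 2)) n).det =
      (hankel c (n + 1)).det * (hankel (fun t => c (t + 2)) (n + 1)).det -
        (hankel (fun t => c (t + 1)) (n + 1)).det ^ 2 := by
  have inner : ((hankel c (n + 2)).submatrix (fun i : Fin n => i.succ.castSucc)
      fun i => i.succ.castSucc) = hankel (fun t => c (t + 2)) n := by
    rw [← hankel_submatrix_succ, ← hankel_submatrix_castSucc c (n + 1), submatrix_submatrix]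
    rfl
  rw [← inner] at hc ⊢
  rw [desnanot_jacobi _ hc, hankel_submatrix_castSucc, hankel_submatrix_succ,
    hankel_submatrix_castSucc_succ, hankel_submatrix_succ_castSucc, sq]

end Determinant

end Matrix

namespace Finset

theorem prod_Icc_add' {M : Type*} [CommMonoid M] (f : ℕ → M) (a b c : ℕ) :
    ∏ t ∈ Icc a b, f (t + c) = ∏ t ∈ Icc (a + c) (b + c), f t := by
  rw [← map_add_right_Icc, prod_map]; rfl

theorem prod_Icc_telescope_two {M : Type*} [CommMonoid M] {a b : ℕ} (h : ℕ → M)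
    (hab : a ≤ b + 1) :
    (∏ t ∈ Icc a b, h (t + 2)) * (h a * h (a + 1)) =
      (∏ t ∈ Icc a b, h t) * (h (b + 1) * h (b + 2)) := by
  rw [← Ico_add_one_right_eq_Icc, show b + 2 = b + 1 + 1 by rfl]
  generalize b + 1 = c at hab ⊢
  induction c, hab using Nat.le_induction with
  | base => simp
  | succ c hc ih =>
    rw [prod_Ico_succ_top hc, prod_Ico_succ_top hc, mul_right_comm, ih]
    simp only [mul_assoc]

theorem prod_Icc_div_telescope_two {K : Type*} [Field K] (c : K) {a b : ℕ} (hab : a ≤ b + 1) :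
    (∏ t ∈ Icc a b, ((t : K) + c + 2) / t) * ((a + c) * (a + c + 1)) =
      (∏ t ∈ Icc a b, ((t : K) + c) / t) * ((b + c + 1) * (b + c + 2)) := by
  have h := prod_Icc_telescope_two (fun t : ℕ => (t : K) + c) hab
  push_cast at h
  simp only [add_right_comm _ _ c] at h
  simp only [prod_div_distrib, div_mul_eq_mul_div, h]

end Finset

section TriangleProd

variable {M : Type*} [CommMonoid M]

def triangleProd (f : ℕ → M) (m : ℕ) : M :=
  ∏ i ∈ Icc 1 m, ∏ j ∈ Icc i m, f (i + j)

theorem triangleProd_zero (f : ℕ → M) : triangleProd f 0 = 1 := by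
  simp [triangleProd]

theorem triangleProd_succ (f : ℕ → M) (m : ℕ) :
    triangleProd f (m + 1) = triangleProd f m * ∏ t ∈ Icc (m + 2) (2 * m + 2), f t := by
  have row (i : ℕ) (hi : i ∈ Icc 1 (m + 1)) :
      ∏ j ∈ Icc i (m + 1), f (i + j) = (∏ j ∈ Icc i m, f (i + j)) * f (i + (m + 1)) :=
    prod_Icc_succ_top (mem_Icc.1 hi).2 _
  rw [triangleProd, prod_congr rfl row, prod_mul_distrib, prod_Icc_succ_top (by omega),
    Icc_eq_empty_of_lt (Nat.lt_succ_self m), prod_empty, mul_one, prod_Icc_add',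
    show 1 + (m + 1) = m + 2 by omega, show m + 1 + (m + 1) = 2 * m + 2 by omega]
  rfl

theorem triangleProd_mul (f g : ℕ → M) (m : ℕ) :
    triangleProd (f * g) m = triangleProd f m * triangleProd g m := by
  simp only [triangleProd, Pi.mul_apply, prod_mul_distrib]

theorem triangleProd_sq_mul (f : ℕ → M) (m : ℕ) :
    triangleProd f (m + 1) ^ 2 * (f (2 * m + 3) * f (2 * m + 4)) =
      triangleProd f m * triangleProd f (m + 2) * f (m + 2) := by
  rw [triangleProd_succ f (m + 1), triangleProd_succ f m]
  set S := triangleProd f m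
  set R := ∏ t ∈ Icc (m + 2) (2 * m + 2), f t
  have window : (∏ t ∈ Icc (m + 1 + 2) (2 * (m + 1) + 2), f t) * f (m + 2) =
      R * (f (2 * m + 3) * f (2 * m + 4)) := by
    calc _ = ∏ t ∈ Icc (m + 2) (2 * m + 2 + 1 + 1), f t := by
          rw [← insert_Icc_add_one_left_eq_Icc (a := m + 2) (by omega), prod_insert (by simp),
            mul_comm]
          rfl
      _ = _ := by rw [prod_Icc_succ_top (by omega), prod_Icc_succ_top (by omega), mul_assoc]
  calc (S * R) ^ 2 * (f (2 * m + 3) * f (2 * m + 4))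
      = S * (S * R) * (R * (f (2 * m + 3) * f (2 * m + 4))) := by rw [sq]; ac_rfl
    _ = _ := by rw [← window]; ac_rfl

theorem triangleProd_add_two (f : ℕ → M) (m : ℕ) :
    triangleProd f (m + 2) =
      triangleProd (fun s => f (s + 2)) m * ∏ t ∈ Icc 2 (2 * m + 4), f t := by
  induction m with
  | zero =>
    simp [triangleProd, show Icc 1 2 = {1, 2} by rfl, show Icc 2 4 = {2, 3, 4} by rfl,
      mul_assoc]
  | succ m ih =>
    rw [triangleProd_succ f (m + 2), ih, triangleProd_succ _ m, prod_Icc_add']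
    have h₁ : ∏ t ∈ Icc (m + 2 + 2) (2 * (m + 2) + 2), f t =
        (∏ t ∈ Icc (m + 2 + 2) (2 * m + 2 + 2), f t) * (f (2 * m + 5) * f (2 * m + 6)) := by
      rw [show 2 * (m + 2) + 2 = 2 * m + 2 + 2 + 1 + 1 by ring, prod_Icc_succ_top (by omega),
        prod_Icc_succ_top (by omega), mul_assoc]
    have h₂ : ∏ t ∈ Icc 2 (2 * (m + 1) + 4), f t =
        (∏ t ∈ Icc 2 (2 * m + 4), f t) * (f (2 * m + 5) * f (2 * m + 6)) := by
      rw [show 2 * (m + 1) + 4 = 2 * m + 4 + 1 + 1 by ring, prod_Icc_succ_top (by omega),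
        prod_Icc_succ_top (by omega), mul_assoc]
    rw [h₁, h₂]
    ac_rfl

end TriangleProd

theorem add_two_mul_catalan_succ (n : ℕ) :
    (n + 2) * catalan (n + 1) = 2 * (2 * n + 1) * catalan n := by
  apply Nat.eq_of_mul_eq_mul_left (by omega : 0 < n + 1)
  calc (n + 1) * ((n + 2) * catalan (n + 1)) = (n + 1) * (n + 1 + 1) * catalan (n + 1) := by ring
    _ = (n + 1) * Nat.centralBinom (n + 1) := by rw [mul_assoc, succ_mul_catalan_eq_centralBinom]
    _ = 2 * (2 * n + 1) * ((n + 1) * catalan n) := by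
      rw [Nat.succ_mul_centralBinom_succ, succ_mul_catalan_eq_centralBinom]
    _ = _ := by ring

def hankelCatalanProd (k m : ℕ) : ℚ :=
  triangleProd (fun s : ℕ => ((s : ℚ) + 2 * k) / s) m

theorem hankelCatalanProd_pos (k m : ℕ) : 0 < hankelCatalanProd k m := by
  unfold hankelCatalanProd triangleProd
  exact prod_pos fun i hi => prod_pos fun j _ => by
    have : (0 : ℚ) < (i + j : ℕ) := by have := (mem_Icc.1 hi).1; positivity
    positivity

theorem hankelCatalanProd_zero_left (m : ℕ) : hankelCatalanProd 0 m = 1 := by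
  unfold hankelCatalanProd triangleProd
  exact prod_eq_one fun i hi => prod_eq_one fun j _ => by
    have : (i : ℚ) + j ≠ 0 := by have := (mem_Icc.1 hi).1; positivity
    simp [this]

theorem hankelCatalanProd_one_left (m : ℕ) : hankelCatalanProd 1 m = catalan (m + 1) := by
  induction m with
  | zero => simp [hankelCatalanProd, triangleProd_zero]
  | succ m ih =>
    have ratio := prod_Icc_div_telescope_two (0 : ℚ) (a := m + 2) (b := 2 * m + 2) (by omega)
    have one : ∏ t ∈ Icc (m + 2) (2 * m + 2), ((t : ℚ) + 0) / t = 1 :=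
      prod_eq_one fun t ht => by
        have : (t : ℚ) ≠ 0 := Nat.cast_ne_zero.2 (by have := (mem_Icc.1 ht).1; omega)
        rw [add_zero, div_self this]
    rw [one] at ratio
    have hcat : ((m + 1 + 2 : ℕ) : ℚ) * catalan (m + 1 + 1) =
        2 * (2 * (m + 1 : ℕ) + 1) * catalan (m + 1) := by
      exact_mod_cast add_two_mul_catalan_succ (m + 1)
    rw [hankelCatalanProd, triangleProd_succ, ← hankelCatalanProd, ih]
    push_cast at ratio hcat ⊢
    simp only [add_zero, mul_one] at ratio ⊢
    apply mul_right_cancel₀ (by positivity : ((m : ℚ) + 2) * (m + 3) ≠ 0)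
    linear_combination (catalan (m + 1) : ℚ) * ratio - (m + 2) * hcat

theorem hankelCatalanProd_add_two_mul (k m : ℕ) :
    hankelCatalanProd (k + 2) m * hankelCatalanProd k (m + 2) *
        ((2 * m + 2 * k + 5) * (2 * m + 2 * k + 6)) =
      hankelCatalanProd (k + 1) m * hankelCatalanProd (k + 1) (m + 2) *
        ((2 * k + 2) * (2 * k + 3)) := by
  let f (k s : ℕ) : ℚ := (s + 2 * k) / s
  have interior : triangleProd (f (k + 2)) m * triangleProd (fun s => f k (s + 2)) m =
      triangleProd (f (k + 1)) m * triangleProd (fun s => f (k + 1) (s + 2)) m := by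
    rw [← triangleProd_mul, ← triangleProd_mul]
    congr 1
    funext s
    simp only [f, Pi.mul_apply]
    push_cast
    ring
  have border := prod_Icc_div_telescope_two (2 * k : ℚ) (a := 2) (b := 2 * m + 4) (by omega)
  push_cast at border
  have shifted : ∏ t ∈ Icc 2 (2 * m + 4), f (k + 1) t =
      ∏ t ∈ Icc 2 (2 * m + 4), ((t : ℚ) + 2 * k + 2) / t :=
    prod_congr rfl fun t _ => by simp only [f]; push_cast; ring
  simp only [hankelCatalanProd]
  rw [triangleProd_add_two, triangleProd_add_two]
  change _ * (_ * ∏ t ∈ Icc 2 (2 * m + 4), f k t) * _ =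
    _ * (_ * ∏ t ∈ Icc 2 (2 * m + 4), f (k + 1) t) * _
  rw [shifted]
  linear_combination
    (∏ t ∈ Icc 2 (2 * m + 4), f k t) * ((2 * m + 2 * k + 5) * (2 * m + 2 * k + 6)) * interior -
      triangleProd (f (k + 1)) m * triangleProd (fun s => f (k + 1) (s + 2)) m * border

theorem hankelCatalanProd_recurrence (k m : ℕ) :
    hankelCatalanProd (k + 2) m * hankelCatalanProd k (m + 2) =
      hankelCatalanProd (k + 1) m * hankelCatalanProd (k + 1) (m + 2) -
        hankelCatalanProd (k + 1) (m + 1) ^ 2 := by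
  have hsq : hankelCatalanProd (k + 1) (m + 1) ^ 2 * ((2 * m + 2 * k + 5) * (2 * m + 2 * k + 6)) *
      (m + 2) = hankelCatalanProd (k + 1) m * hankelCatalanProd (k + 1) (m + 2) *
        ((2 * m + 3) * (2 * m + 4) * (m + 2 * k + 4)) := by
    have h := triangleProd_sq_mul (fun s : ℕ => ((s : ℚ) + 2 * (k + 1 : ℕ)) / s) m
    change hankelCatalanProd (k + 1) (m + 1) ^ 2 * _ =
      hankelCatalanProd (k + 1) m * hankelCatalanProd (k + 1) (m + 2) * _ at h
    push_cast at h
    field_simp at h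
    linear_combination h
  have hshift := hankelCatalanProd_add_two_mul k m
  apply mul_right_cancel₀ (by positivity :
    ((2 * m + 2 * k + 5) * (2 * m + 2 * k + 6) * (m + 2) : ℚ) ≠ 0)
  linear_combination (m + 2 : ℚ) * hshift + hsq

theorem det_hankel_catalan (k m : ℕ) :
    (Matrix.hankel (fun t => (catalan (t + m + 1) : ℚ)) k).det = hankelCatalanProd k m := by
  induction k using Nat.twoStepInduction generalizing m with
  | zero => rw [hankelCatalanProd_zero_left]; exact Matrix.det_isEmpty
  | one => simp [Matrix.hankel, hankelCatalanProd_one_left]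
  | more k ih₀ ih₁ =>
    have shift (j : ℕ) : (fun t => (catalan (t + j + m + 1) : ℚ)) =
        fun t => (catalan (t + (m + j) + 1) : ℚ) := by
      funext t; ring_nf
    have hc : IsUnit (Matrix.hankel (fun t => (catalan (t + 2 + m + 1) : ℚ)) k).det := by
      rw [shift, ih₀]
      exact (hankelCatalanProd_pos k (m + 2)).ne'.isUnit
    have dj := Matrix.det_hankel_mul_det_hankel (fun t => (catalan (t + m + 1) : ℚ)) k hc
    simp only [shift, ih₀, ih₁] at dj
    rw [← hankelCatalanProd_recurrence] at dj
    exact mul_right_cancel₀ (hankelCatalanProd_pos k (m + 2)).ne' dj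

/-- The Hankel determinant of Catalan numbers counting type-A generalized
k-triangulations: `det(C_{n−i−j})_{i,j=1,…,k} = ∏_{1≤i≤j≤n−2k−1} (i+j+2k)/(i+j)`. -/
theorem stmt_18 (n k : ℕ) (h : 2 * k + 1 ≤ n) :
    Matrix.det (Matrix.of fun i j : Fin k =>
        (catalan (n - ((i : ℕ) + 1) - ((j : ℕ) + 1)) : ℚ)) =
      ∏ i ∈ Finset.Icc 1 (n - 2 * k - 1), ∏ j ∈ Finset.Icc i (n - 2 * k - 1),
        (((i : ℚ) + (j : ℚ) + 2 * (k : ℚ)) / ((i : ℚ) + (j : ℚ))) := by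
  obtain ⟨m, rfl⟩ : ∃ m, n = m + 2 * k + 1 := ⟨n - 2 * k - 1, by omega⟩
  have reversed : (Matrix.of fun i j : Fin k =>
      (catalan (m + 2 * k + 1 - ((i : ℕ) + 1) - ((j : ℕ) + 1)) : ℚ)) =
        (Matrix.hankel (fun t => (catalan (t + m + 1) : ℚ)) k).submatrix Fin.revPerm
          Fin.revPerm := by
    ext i j
    simp only [Matrix.of_apply, Matrix.submatrix_apply, Matrix.hankel, Fin.revPerm_apply,
      Fin.val_rev]
    congr 2
    omega
  rw [reversed, Matrix.det_submatrix_equiv_self, det_hankel_catalan,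
    show m + 2 * k + 1 - 2 * k - 1 = m by omega]
  unfold hankelCatalanProd triangleProd
  push_cast
  rfl
end

section
/- For fixed l = n−k, the Hankel determinant det[binom(2l, l+i−j)]_{i,j=1,…,k} equals the triple product ∏_{h=1}^{l} ∏_{i=1}^{k} ∏_{j=1}^{l} (h+i+j−1)/(h+i+j−2). -/
/-!
Write `T_k(m)` for the `k × k` Toeplitz matrix `[binom(N, m + i - j)]`, so the Hankel matrix of
the theorem is `T_k(l)` with `N = 2l`. Dodgson condensation gives
`det T_{k+2}(m) · det T_k(m) = (det T_{k+1}(m))² - det T_{k+1}(m - 1) · det T_{k+1}(m + 1)`,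
and MacMahon's box product `M(u, v, k)` (plane partitions in a `u × v × k` box) satisfies the
same recurrence in `(u, v) = (m, N - m)`, with the same values for `k = 0, 1`. At `m = 0` and
`m = N` the matrix is triangular with unit diagonal and the product is `1`, so both sides agree
for all `0 ≤ m ≤ N`. The triple product telescopes in `h` to `M(l, l, k)`.
-/

open Finset Matrix
open scoped Nat

namespace Matrix

section Condensation

variable {R : Type*} [CommRing R]

section Blocks

variable {ι : Type*} [Fintype ι] [DecidableEq ι]

def borderMinor (X : Matrix (ι ⊕ Fin 2) (ι ⊕ Fin 2) R) (p q : Fin 2) :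
    Matrix (ι ⊕ Unit) (ι ⊕ Unit) R :=
  X.submatrix (Sum.map id fun _ => p) (Sum.map id fun _ => q)

theorem det_borderMinor (X : Matrix (ι ⊕ Fin 2) (ι ⊕ Fin 2) R) [Invertible X.toBlocks₁₁]
    (p q : Fin 2) :
    (X.borderMinor p q).det =
      X.toBlocks₁₁.det * (X.toBlocks₂₂ - X.toBlocks₂₁ * ⅟X.toBlocks₁₁ * X.toBlocks₁₂) p q := by
  have hblocks : X.borderMinor p q = fromBlocks X.toBlocks₁₁ (of fun i _ => X.toBlocks₁₂ i q)
      (of fun _ j => X.toBlocks₂₁ p j) (of fun _ _ => X.toBlocks₂₂ p q) := by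
    ext (i | _) (j | _) <;> rfl
  rw [hblocks, det_fromBlocks₁₁, det_unique (n := Unit)]
  simp [mul_apply, Finset.sum_mul]

/-- Both sides are `(det A)²` times the determinant of the `2 × 2` Schur complement of the
top-left block `A`. -/
theorem det_mul_det_toBlocks₁₁_s19 (X : Matrix (ι ⊕ Fin 2) (ι ⊕ Fin 2) R)
    [Invertible X.toBlocks₁₁] :
    X.det * X.toBlocks₁₁.det =
      (X.borderMinor 0 0).det * (X.borderMinor 1 1).det
        - (X.borderMinor 0 1).det * (X.borderMinor 1 0).det := by
  have hX := det_fromBlocks₁₁ X.toBlocks₁₁ X.toBlocks₁₂ X.toBlocks₂₁ X.toBlocks₂₂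
  rw [fromBlocks_toBlocks, det_fin_two] at hX
  simp only [hX, det_borderMinor]
  ring

end Blocks

theorem det_submatrix_equiv {α β : Type*} [Fintype α] [DecidableEq α] [Fintype β]
    [DecidableEq β] (N : Matrix β β R) (g g' : α ≃ β) :
    (N.submatrix g g').det = Equiv.Perm.sign (g'.trans g.symm) * N.det := by
  rw [← det_submatrix_equiv_self g N, ← det_permute']
  congr 1
  ext i j
  simp

section Fin

variable (n : ℕ)

def interiorBorderEquiv : Fin n ⊕ Fin 2 ≃ Fin (n + 2) where
  toFun := Sum.elim (fun i => i.castSucc.succ) ![0, Fin.last (n + 1)]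
  invFun := Fin.cases (Sum.inr 0) (Fin.lastCases (Sum.inr 1) Sum.inl)
  left_inv := by
    rintro (i | q)
    · simp
    · fin_cases q <;> simp [← Fin.succ_last]
  right_inv := by
    intro x
    induction x using Fin.cases with
    | zero => simp
    | succ y => induction y using Fin.lastCases <;> simp [← Fin.succ_last]

def borderEquiv : Fin 2 → (Fin n ⊕ Unit ≃ Fin (n + 1)) :=
  ![(Equiv.optionEquivSumPUnit (Fin n)).symm.trans (finSuccEquiv n).symm,
    (Equiv.optionEquivSumPUnit (Fin n)).symm.trans finSuccEquivLast.symm]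

def borderEmbedding : Fin 2 → Fin (n + 1) → Fin (n + 2) :=
  ![Fin.castSucc, Fin.succ]

variable {n}

theorem interiorBorderEquiv_comp_sumMap (p : Fin 2) :
    interiorBorderEquiv n ∘ Sum.map id (fun _ : Unit => p) =
      borderEmbedding n p ∘ borderEquiv n p := by
  funext x
  fin_cases p <;> rcases x with i | _ <;>
    simp [interiorBorderEquiv, borderEquiv, borderEmbedding]

/-- The Desnanot–Jacobi identity (Dodgson condensation). -/
theorem det_mul_det_submatrix_interior (M : Matrix (Fin (n + 2)) (Fin (n + 2)) R)
    (h : IsUnit (M.submatrix (fun i : Fin n => i.castSucc.succ) fun i => i.castSucc.succ).det) :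
    M.det * (M.submatrix (fun i : Fin n => i.castSucc.succ) fun i => i.castSucc.succ).det =
      (M.submatrix Fin.castSucc Fin.castSucc).det * (M.submatrix Fin.succ Fin.succ).det
        - (M.submatrix Fin.castSucc Fin.succ).det * (M.submatrix Fin.succ Fin.castSucc).det := by
  set X := M.submatrix (interiorBorderEquiv n) (interiorBorderEquiv n)
  have hinterior : X.toBlocks₁₁ =
      M.submatrix (fun i : Fin n => i.castSucc.succ) fun i => i.castSucc.succ := rfl
  have : Invertible X.toBlocks₁₁ := invertibleOfIsUnitDet _ (hinterior ▸ h)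
  have hminor (p q : Fin 2) : X.borderMinor p q =
      (M.submatrix (borderEmbedding n p) (borderEmbedding n q)).submatrix
        (borderEquiv n p) (borderEquiv n q) := by
    simp only [X, borderMinor, submatrix_submatrix, interiorBorderEquiv_comp_sumMap]
  have hsign : (Equiv.Perm.sign ((borderEquiv n 1).trans (borderEquiv n 0).symm) : R) *
      Equiv.Perm.sign ((borderEquiv n 0).trans (borderEquiv n 1).symm) = 1 := by
    rw [← Equiv.Perm.sign_symm ((borderEquiv n 0).trans _)]
    simp [← Int.cast_mul, ← Units.val_mul, Int.units_mul_self]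
  have key := det_mul_det_toBlocks₁₁_s19 X
  rw [hinterior] at key
  simp only [hminor, X, det_submatrix_equiv_self] at key
  rw [det_submatrix_equiv, det_submatrix_equiv] at key
  simp only [borderEmbedding, Matrix.cons_val_zero, Matrix.cons_val_one] at key
  linear_combination key
    - (M.submatrix Fin.castSucc Fin.succ).det * (M.submatrix Fin.succ Fin.castSucc).det * hsign

end Fin

end Condensation

section Toeplitz

variable {R : Type*}

def toeplitz (a : ℤ → R) (m : ℤ) (n : ℕ) : Matrix (Fin n) (Fin n) R :=
  of fun i j => a (m + i - j)

theorem toeplitz_submatrix (a : ℤ → R) {m m' : ℤ} {N n : ℕ} {f g : Fin n → Fin N}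
    (hfg : ∀ i j, m + (f i : ℤ) - g j = m' + i - j) :
    (toeplitz a m N).submatrix f g = toeplitz a m' n := by
  ext i j
  simp [toeplitz, hfg]

variable [CommRing R] (a : ℤ → R)

theorem det_toeplitz_condensation (m : ℤ) (n : ℕ) (h : IsUnit (toeplitz a m n).det) :
    (toeplitz a m (n + 2)).det * (toeplitz a m n).det =
      (toeplitz a m (n + 1)).det ^ 2
        - (toeplitz a (m - 1) (n + 1)).det * (toeplitz a (m + 1) (n + 1)).det := by
  have hinterior := toeplitz_submatrix a (m := m) (m' := m) (N := n + 2)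
    (f := fun i : Fin n => i.castSucc.succ) (g := fun i => i.castSucc.succ)
    fun i j => by simp; ring
  have key := det_mul_det_submatrix_interior (toeplitz a m (n + 2)) (hinterior ▸ h)
  rwa [hinterior, toeplitz_submatrix a (m' := m) fun i j => by simp,
    toeplitz_submatrix a (m' := m) fun i j => by simp; ring,
    toeplitz_submatrix a (m' := m - 1) (f := Fin.castSucc) (g := Fin.succ)
      fun i j => by simp; ring,
    toeplitz_submatrix a (m' := m + 1) (f := Fin.succ) (g := Fin.castSucc)
      fun i j => by simp; ring,
    ← sq] at key

theorem det_toeplitz_of_lt (m : ℤ) (n : ℕ) (h : ∀ r < m, a r = 0) :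
    (toeplitz a m n).det = a m ^ n := by
  rw [det_of_isLowerTriangular (toeplitz a m n) fun i j (hij : i < j) => h _ (by omega)]
  simp [toeplitz]

theorem det_toeplitz_of_gt (m : ℤ) (n : ℕ) (h : ∀ r > m, a r = 0) :
    (toeplitz a m n).det = a m ^ n := by
  rw [det_of_isUpperTriangular (M := toeplitz a m n) fun i j (hij : j < i) => h _ (by omega)]
  simp [toeplitz]

end Toeplitz

end Matrix

def intChoose (N : ℕ) (r : ℤ) : ℚ :=
  if 0 ≤ r then N.choose r.toNat else 0

theorem intChoose_of_neg {N : ℕ} {r : ℤ} (hr : r < 0) : intChoose N r = 0 := by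
  simp [intChoose, not_le.2 hr]

theorem intChoose_of_gt {N : ℕ} {r : ℤ} (hr : N < r) : intChoose N r = 0 := by
  rw [intChoose, if_pos (by omega), Nat.choose_eq_zero_of_lt (by omega), Nat.cast_zero]

@[simp]
theorem intChoose_natCast (N k : ℕ) : intChoose N k = N.choose k := by
  simp [intChoose]

/-- MacMahon's product for plane partitions in a `u × v × k` box, taken layer by layer. -/
def macMahon (u v k : ℕ) : ℚ :=
  ∏ t ∈ range k, ((u + v + t)! * t ! : ℚ) / ((u + t)! * (v + t)!)

theorem macMahon_succ (u v k : ℕ) :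
    macMahon u v (k + 1) = macMahon u v k * ((u + v + k)! * k ! / ((u + k)! * (v + k)!)) :=
  prod_range_succ _ _

theorem macMahon_ne_zero (u v k : ℕ) : macMahon u v k ≠ 0 :=
  prod_ne_zero_iff.2 fun _ _ => by positivity

theorem macMahon_one (u v : ℕ) : macMahon u v 1 = (u + v).choose u := by
  simp [macMahon, Nat.cast_add_choose]

theorem macMahon_zero_left (v k : ℕ) : macMahon 0 v k = 1 :=
  prod_eq_one fun t _ => by rw [zero_add, zero_add, mul_comm]; exact div_self (by positivity)

theorem macMahon_zero_right (u k : ℕ) : macMahon u 0 k = 1 :=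
  prod_eq_one fun t _ => by rw [add_zero, zero_add]; exact div_self (by positivity)

theorem macMahon_corner (s r k : ℕ) :
    macMahon s (r + 2) k * macMahon (s + 2) r k * ((s + k + 1) * (r + k + 1)) =
      macMahon (s + 1) (r + 1) k ^ 2 * ((s + 1) * (r + 1)) := by
  induction k with
  | zero => simp [macMahon]
  | succ k ih =>
    simp only [macMahon_succ]
    rw [show s + (r + 2) + k = s + r + k + 2 by ring, show s + 2 + r + k = s + r + k + 2 by ring,
      show s + 1 + (r + 1) + k = s + r + k + 2 by ring, show s + 2 + k = s + k + 1 + 1 by ring,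
      show r + 2 + k = r + k + 1 + 1 by ring, show s + 1 + k = s + k + 1 by ring,
      show r + 1 + k = r + k + 1 by ring]
    simp only [Nat.factorial_succ]
    push_cast
    field_simp
    linear_combination (s + k + 2 : ℚ) * (r + k + 2) * ih

theorem macMahon_condensation (s r k : ℕ) :
    macMahon (s + 1) (r + 1) (k + 2) * macMahon (s + 1) (r + 1) k =
      macMahon (s + 1) (r + 1) (k + 1) ^ 2
        - macMahon s (r + 2) (k + 1) * macMahon (s + 2) r (k + 1) := by
  have hcorner := macMahon_corner s r (k + 1)
  rw [← eq_div_iff (by positivity)] at hcorner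
  rw [hcorner, macMahon_succ _ _ (k + 1), macMahon_succ]
  rw [show s + 1 + (r + 1) + (k + 1) = s + r + k + 2 + 1 by ring,
    show s + 1 + (r + 1) + k = s + r + k + 2 by ring, show s + 1 + (k + 1) = s + k + 1 + 1 by ring,
    show r + 1 + (k + 1) = r + k + 1 + 1 by ring, show s + 1 + k = s + k + 1 by ring,
    show r + 1 + k = r + k + 1 by ring]
  simp only [Nat.factorial_succ]
  push_cast
  field_simp
  ring

theorem det_toeplitz_intChoose (u v k : ℕ) :
    (toeplitz (intChoose (u + v)) u k).det = macMahon u v k := by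
  induction k using Nat.twoStepInduction generalizing u v with
  | zero => simp [macMahon]
  | one => simp [toeplitz, macMahon_one]
  | more k ih₀ ih₁ =>
    rcases u with _ | s
    · rw [macMahon_zero_left, Nat.cast_zero,
        det_toeplitz_of_lt (intChoose (0 + v)) _ _ fun r hr => intChoose_of_neg hr]
      simp [intChoose]
    rcases v with _ | r
    · rw [macMahon_zero_right,
        det_toeplitz_of_gt _ _ _ fun r hr => intChoose_of_gt (by push_cast at hr ⊢; omega),
        intChoose_natCast, add_zero, Nat.choose_self, Nat.cast_one, one_pow]
    have hunit : IsUnit (toeplitz (intChoose (s + 1 + (r + 1))) (s + 1 : ℕ) k).det := by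
      rw [ih₀]
      exact (macMahon_ne_zero _ _ _).isUnit
    have hleft : toeplitz (intChoose (s + 1 + (r + 1))) ((s + 1 : ℕ) - 1) (k + 1) =
        toeplitz (intChoose (s + (r + 2))) s (k + 1) := by
      rw [show s + 1 + (r + 1) = s + (r + 2) by ring]
      push_cast
      ring_nf
    have hright : toeplitz (intChoose (s + 1 + (r + 1))) ((s + 1 : ℕ) + 1) (k + 1) =
        toeplitz (intChoose (s + 2 + r)) (s + 2 : ℕ) (k + 1) := by
      rw [show s + 1 + (r + 1) = s + 2 + r by ring]
      push_cast
      ring_nf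
    have hcond := det_toeplitz_condensation _ _ _ hunit
    rw [ih₀, ih₁, hleft, hright, ih₁, ih₁] at hcond
    exact mul_right_cancel₀ (macMahon_ne_zero _ _ _)
      (hcond.trans (macMahon_condensation s r k).symm)

theorem prod_Icc_one_eq_prod_range {M : Type*} [CommMonoid M] (f : ℕ → M) (n : ℕ) :
    ∏ i ∈ Icc 1 n, f i = ∏ i ∈ range n, f (i + 1) := by
  induction n with
  | zero => simp
  | succ n ih => rw [prod_Icc_succ_top (by omega), ih, prod_range_succ]

theorem prod_range_add_one_div_self {c : ℚ} (hc : 0 < c) (n : ℕ) :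
    ∏ i ∈ range n, (c + i + 1) / (c + i) = (c + n) / c := by
  induction n with
  | zero => simp [hc.ne']
  | succ n ih =>
    rw [prod_range_succ, ih]
    push_cast
    field_simp
    ring

theorem prod_range_natCast_add_succ (a n : ℕ) :
    ∏ i ∈ range n, ((a + i + 1 : ℕ) : ℚ) = (a + n)! / a ! := by
  rw [eq_div_iff (by positivity), ← Nat.cast_prod, mul_comm, ← Nat.cast_mul,
    ← Nat.factorial_mul_ascFactorial, Nat.ascFactorial_eq_prod_range]
  simp only [add_right_comm]

theorem prod_Icc_div_eq_macMahon (k l : ℕ) :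
    ∏ h ∈ Icc 1 l, ∏ i ∈ Icc 1 k, ∏ j ∈ Icc 1 l,
      (((h : ℚ) + i + j - 1) / (h + i + j - 2)) = macMahon l l k := by
  simp only [prod_Icc_one_eq_prod_range, macMahon]
  rw [prod_comm]
  refine prod_congr rfl fun t _ => ?_
  rw [prod_comm]
  have htelescope (j : ℕ) :
      ∏ h ∈ range l, (((h + 1 : ℕ) : ℚ) + (t + 1 : ℕ) + (j + 1 : ℕ) - 1) /
        ((h + 1 : ℕ) + (t + 1 : ℕ) + (j + 1 : ℕ) - 2) =
      ((l + t + j + 1 : ℕ) : ℚ) / (t + j + 1 : ℕ) := by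
    have := prod_range_add_one_div_self (c := ((t + j + 1 : ℕ) : ℚ)) (by positivity) l
    push_cast at this ⊢
    rw [show (l + t + j + 1 : ℚ) = t + j + 1 + l by ring, ← this]
    refine prod_congr rfl fun h _ => ?_
    ring_nf
  simp only [htelescope, prod_div_distrib, prod_range_natCast_add_succ]
  rw [show l + t + l = l + l + t by ring, show t + l = l + t by ring]
  field_simp

theorem stmt_19_general (k l : ℕ) :
    Matrix.det (Matrix.of fun i j : Fin k =>
        if (j : ℕ) ≤ l + (i : ℕ) then
          ((Nat.choose (2 * l) (l + ((i : ℕ) + 1) - ((j : ℕ) + 1))) : ℚ)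
        else 0) =
      ∏ h ∈ Finset.Icc 1 l, ∏ i ∈ Finset.Icc 1 k, ∏ j ∈ Finset.Icc 1 l,
        (((h : ℚ) + (i : ℚ) + (j : ℚ) - 1) / ((h : ℚ) + (i : ℚ) + (j : ℚ) - 2)) := by
  have hmatrix : (of fun i j : Fin k =>
      if (j : ℕ) ≤ l + (i : ℕ) then
        ((Nat.choose (2 * l) (l + ((i : ℕ) + 1) - ((j : ℕ) + 1))) : ℚ)
      else 0) = toeplitz (intChoose (l + l)) l k := by
    ext i j
    simp only [toeplitz, of_apply, intChoose, ← two_mul]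
    split_ifs <;> first | rfl | omega | (congr 2; omega)
  rw [hmatrix, det_toeplitz_intChoose, prod_Icc_div_eq_macMahon]

/-- For `l = n−k`, the Hankel determinant `det[binom(2l, l+i−j)]_{i,j=1,…,k}` equals the
triple product `∏_{h=1}^{l} ∏_{i=1}^{k} ∏_{j=1}^{l} (h+i+j−1)/(h+i+j−2)` (the entry is
`0` when `l+i−j < 0`, matching the vanishing of the binomial coefficient). -/
theorem stmt_19 (k l : ℕ) (hk : 1 ≤ k) (hl : 1 ≤ l) :
    Matrix.det (Matrix.of fun i j : Fin k =>
        if (j : ℕ) ≤ l + (i : ℕ) then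
          ((Nat.choose (2 * l) (l + ((i : ℕ) + 1) - ((j : ℕ) + 1))) : ℚ)
        else 0) =
      ∏ h ∈ Finset.Icc 1 l, ∏ i ∈ Finset.Icc 1 k, ∏ j ∈ Finset.Icc 1 l,
        (((h : ℚ) + (i : ℚ) + (j : ℚ) - 1) / ((h : ℚ) + (i : ℚ) + (j : ℚ) - 2)) :=
  stmt_19_general k l
end
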